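/- arXiv:1512.07691 — 7 statements merged into one kernel-verified Lean document; each statement's English description precedes it below -/
import Mathlib

section
/- Let 0 < a < b, ℓ > 0, and let κ : ℝ → ℝ be continuous, nonnegative, vanishing outside (a,b), with ∫_a^b κ(x) dx = 1 and κ(x) ≤ 2/(ℓ x) for every x > 0. Define f(z) = ∫_0^{|z|} (∫_0^y κ(x) dx) dy. Then for all c, x ∈ ℝ, |f(c+x) − f(c) − f'(c)·x| ≤ x² ∫_0^1 κ(|c+ux|)(1−u) du; moreover, if c + ux ≠ 0 for every u ∈ [0,1], then x² ∫_0^1 κ(|c+ux|)(1−u) du ≤ (2/ℓ) x² ∫_0^1 (1−u)/|c+ux| du. -/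
/-!
Since κ vanishes on `(-∞, 0]`, its primitive `F y = ∫₀^y κ` vanishes there too, so
`f z = ∫₀^z (F y - F (-y)) dy`. Hence `f` is `C²` with `f'' z = κ z + κ (-z) = κ |z|`, and the
first bound is Taylor's formula with integral remainder, whose remainder is nonnegative. The
second bound integrates `κ t ≤ 2 / (ℓ t)` at `t = |c + u x|`.
-/

open Real MeasureTheory

theorem taylor_sub_sub_deriv_mul_eq_integral_remainder {f f' f'' : ℝ → ℝ}
    (hf : ∀ z, HasDerivAt f (f' z) z) (hf' : ∀ z, HasDerivAt f' (f'' z) z)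
    (hf''c : Continuous f'') (c x : ℝ) :
    f (c + x) - f c - f' c * x = x ^ 2 * ∫ u in (0:ℝ)..1, f'' (c + u * x) * (1 - u) := by
  have hline : ∀ u : ℝ, HasDerivAt (fun u : ℝ => c + u * x) x u := fun u => by
    simpa using ((hasDerivAt_id u).mul_const x).const_add c
  have hφ : ∀ u : ℝ, HasDerivAt (fun u => (1 - u) * (x * f' (c + u * x)) + f (c + u * x))
      (x ^ 2 * (f'' (c + u * x) * (1 - u))) u := fun u => by
    have h := (((hasDerivAt_id u).const_sub 1).mul
      (((hf' _).comp u (hline u)).const_mul x)).add ((hf _).comp u (hline u))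
    exact h.congr_deriv (by simp only [Function.comp_apply, id_eq]; ring)
  have hint := intervalIntegral.integral_eq_sub_of_hasDerivAt (fun u _ => hφ u)
    ((by fun_prop : Continuous fun u => x ^ 2 * (f'' (c + u * x) * (1 - u))).intervalIntegrable 0 1)
  rw [intervalIntegral.integral_const_mul] at hint
  rw [hint]
  simp only [zero_mul, add_zero, one_mul, sub_zero, sub_self]
  ring

theorem intervalIntegral_eq_zero_of_forall_nonpos {κ : ℝ → ℝ} (hκ : ∀ t ≤ 0, κ t = 0)
    {y : ℝ} (hy : y ≤ 0) : ∫ t in (0:ℝ)..y, κ t = 0 := by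
  rw [intervalIntegral.integral_congr (g := fun _ => (0:ℝ)), intervalIntegral.integral_zero]
  intro t ht
  rw [Set.uIcc_of_ge hy] at ht
  exact hκ t ht.2

theorem intervalIntegral_abs_eq_integral_sub_comp_neg {F : ℝ → ℝ} (hF : ∀ y ≤ 0, F y = 0)
    (z : ℝ) : ∫ y in (0:ℝ)..|z|, F y = ∫ y in (0:ℝ)..z, (F y - F (-y)) := by
  rcases le_or_gt 0 z with hz | hz
  · rw [abs_of_nonneg hz]
    refine intervalIntegral.integral_congr fun y hy => ?_
    rw [Set.uIcc_of_le hz] at hy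
    simp [hF (-y) (by linarith [hy.1])]
  · rw [abs_of_neg hz, intervalIntegral.integral_congr (f := fun y => F y - F (-y))
      (g := fun y => -F (-y)), intervalIntegral.integral_neg,
      intervalIntegral.integral_comp_neg (fun y => F y), intervalIntegral.integral_symm,
      neg_zero]
    intro y hy
    rw [Set.uIcc_of_ge hz.le] at hy
    simp [hF y hy.2]

theorem add_comp_neg_eq_comp_abs {κ : ℝ → ℝ} (hκ : ∀ t ≤ 0, κ t = 0) (z : ℝ) :
    κ z + κ (-z) = κ |z| := by
  rcases le_or_gt z 0 with hz | hz
  · rw [hκ z hz, abs_of_nonpos hz, zero_add]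
  · rw [hκ (-z) (by linarith), abs_of_pos hz, add_zero]

theorem hasDerivAt_integral_sub_integral_neg {κ : ℝ → ℝ} (hκc : Continuous κ) (z : ℝ) :
    HasDerivAt (fun w => (∫ t in (0:ℝ)..w, κ t) - ∫ t in (0:ℝ)..(-w), κ t)
      (κ z + κ (-z)) z := by
  have hF : ∀ w, HasDerivAt (fun w => ∫ t in (0:ℝ)..w, κ t) (κ w) w := fun w =>
    (hκc.integral_hasStrictDerivAt 0 w).hasDerivAt
  have h := (hF z).sub ((hF (-z)).comp z (hasDerivAt_neg z))
  rwa [mul_neg_one, sub_neg_eq_add] at h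

theorem integral_mul_one_sub_le_of_le_div {κ : ℝ → ℝ} (hκc : Continuous κ) {ℓ : ℝ}
    (hκbd : ∀ x > (0:ℝ), κ x ≤ 2 / (ℓ * x)) {c x : ℝ}
    (hne : ∀ u ∈ Set.Icc (0:ℝ) 1, c + u * x ≠ 0) :
    ∫ u in (0:ℝ)..1, κ |c + u * x| * (1 - u) ≤
      2 / ℓ * ∫ u in (0:ℝ)..1, (1 - u) / |c + u * x| := by
  have hpos : ∀ u ∈ Set.Icc (0:ℝ) 1, 0 < |c + u * x| := fun u hu => abs_pos.2 (hne u hu)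
  rw [← intervalIntegral.integral_const_mul]
  refine intervalIntegral.integral_mono_on zero_le_one
    ((by fun_prop : Continuous fun u => κ |c + u * x| * (1 - u)).intervalIntegrable 0 1) ?_ ?_
  · refine (continuousOn_const.mul ((by fun_prop : Continuous fun u : ℝ => 1 - u).continuousOn.div
      (by fun_prop) fun u hu => (hpos u ?_).ne')).intervalIntegrable
    rwa [Set.uIcc_of_le zero_le_one] at hu
  · intro u hu
    calc κ |c + u * x| * (1 - u) ≤ 2 / (ℓ * |c + u * x|) * (1 - u) :=
          mul_le_mul_of_nonneg_right (hκbd _ (hpos u hu)) (by linarith [hu.2])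
      _ = 2 / ℓ * ((1 - u) / |c + u * x|) := by
          ring

theorem stmt_2_general (a b ℓ : ℝ) (ha : 0 < a)
    (κ : ℝ → ℝ) (hκc : Continuous κ) (hκ0 : ∀ x, 0 ≤ κ x)
    (hκsupp : ∀ x, x ∉ Set.Ioo a b → κ x = 0)
    (hκbd : ∀ x > (0:ℝ), κ x ≤ 2 / (ℓ * x))
    (f : ℝ → ℝ)
    (hf : ∀ z, f z = ∫ y in (0:ℝ)..|z|, ∫ x in (0:ℝ)..y, κ x)
    (c x : ℝ) :
    |f (c + x) - f c - deriv f c * x| ≤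
        x ^ 2 * ∫ u in (0:ℝ)..1, κ |c + u * x| * (1 - u) ∧
      ((∀ u ∈ Set.Icc (0:ℝ) 1, c + u * x ≠ 0) →
        x ^ 2 * ∫ u in (0:ℝ)..1, κ |c + u * x| * (1 - u) ≤
          (2 / ℓ) * x ^ 2 * ∫ u in (0:ℝ)..1, (1 - u) / |c + u * x|) := by
  have hκneg : ∀ t ≤ 0, κ t = 0 := fun t ht =>
    hκsupp t fun h => (ha.trans h.1).not_ge ht
  set G : ℝ → ℝ := fun z => (∫ t in (0:ℝ)..z, κ t) - ∫ t in (0:ℝ)..(-z), κ t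
  have hG' : ∀ z, HasDerivAt G (κ |z|) z := fun z => by
    simpa only [add_comp_neg_eq_comp_abs hκneg] using hasDerivAt_integral_sub_integral_neg hκc z
  have hf' : ∀ z, HasDerivAt f (G z) z := fun z => by
    have hfG : f = fun w => ∫ y in (0:ℝ)..w, G y := funext fun w => by
      rw [hf, intervalIntegral_abs_eq_integral_sub_comp_neg
        (fun y hy => intervalIntegral_eq_zero_of_forall_nonpos hκneg hy)]
    rw [hfG]
    exact ((continuous_iff_continuousAt.2 fun w => (hG' w).continuousAt).integral_hasStrictDerivAt
      0 z).hasDerivAt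
  have htaylor := taylor_sub_sub_deriv_mul_eq_integral_remainder hf' hG' (by fun_prop) c x
  have hrem : 0 ≤ ∫ u in (0:ℝ)..1, κ |c + u * x| * (1 - u) :=
    intervalIntegral.integral_nonneg zero_le_one fun u hu =>
      mul_nonneg (hκ0 _) (by linarith [hu.2])
  refine ⟨?_, fun hne => ?_⟩
  · rw [(hf' c).deriv, htaylor, abs_of_nonneg (mul_nonneg (sq_nonneg x) hrem)]
  · rw [mul_assoc, mul_left_comm]
    exact mul_le_mul_of_nonneg_left (integral_mul_one_sub_le_of_le_div hκc hκbd hne) (sq_nonneg x)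

theorem stmt_2 (a b ℓ : ℝ) (ha : 0 < a) (hab : a < b) (hℓ : 0 < ℓ)
    (κ : ℝ → ℝ) (hκc : Continuous κ) (hκ0 : ∀ x, 0 ≤ κ x)
    (hκsupp : ∀ x, x ∉ Set.Ioo a b → κ x = 0)
    (hκint : ∫ x in a..b, κ x = 1)
    (hκbd : ∀ x > (0:ℝ), κ x ≤ 2 / (ℓ * x))
    (f : ℝ → ℝ)
    (hf : ∀ z, f z = ∫ y in (0:ℝ)..|z|, ∫ x in (0:ℝ)..y, κ x)
    (c x : ℝ) :
    |f (c + x) - f c - deriv f c * x| ≤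
        x ^ 2 * ∫ u in (0:ℝ)..1, κ |c + u * x| * (1 - u) ∧
      ((∀ u ∈ Set.Icc (0:ℝ) 1, c + u * x ≠ 0) →
        x ^ 2 * ∫ u in (0:ℝ)..1, κ |c + u * x| * (1 - u) ≤
          (2 / ℓ) * x ^ 2 * ∫ u in (0:ℝ)..1, (1 - u) / |c + u * x|) :=
  stmt_2_general a b ℓ ha κ hκc hκ0 hκsupp hκbd f hf c x
end

section
/- Let 0 < a < b, ℓ > 0, and let κ : ℝ → ℝ be continuous, nonnegative, vanishing outside (a,b), with ∫_a^b κ(x) dx = 1 and κ(x) ≤ 2/(ℓ x) for every x > 0. Define f(z) = ∫_0^{|z|} (∫_0^y κ(x) dx) dy. Let h : ℝ → ℝ be a function such that x ↦ x + h(x) is nondecreasing. Then for all x ≠ y, setting l = h(x) − h(y), one has f(x−y+l) − f(x−y) − f'(x−y)·l ≤ (2/ℓ) ∫_0^1 l²(1−u)/|x−y+ul| du ≤ 2 l² / (ℓ |x−y|). -/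
open Real MeasureTheory

/-!
Extending `κ` evenly, `G t = ∫₀ᵗ κ |s| ds` is odd, so `f` is its even primitive and
`f'' = κ ∘ |·|`. Taylor's formula with integral remainder along `u ↦ x - y + u l` writes the
left-hand side as `∫₀¹ (1 - u) l² κ |x - y + u l| du`. Since `x ↦ x + h x` is monotone,
`x - y` and `x - y + l` have the same sign, so `|x - y + u l| ≥ (1 - u) |x - y| > 0` for `u < 1`;
the bound `κ w ≤ 2 / (ℓ w)` then gives the first inequality and this lower bound the second.
-/

open intervalIntegral Set

theorem integral_zero_neg_of_even {g : ℝ → ℝ} (hg : ∀ s, g (-s) = g s) (t : ℝ) :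
    ∫ s in (0 : ℝ)..-t, g s = -∫ s in (0 : ℝ)..t, g s := by
  rw [← integral_symm, ← neg_zero, ← integral_comp_neg, neg_zero]
  simp only [hg]

theorem integral_zero_abs_of_odd {g : ℝ → ℝ} (hg : ∀ s, g (-s) = -g s) (t : ℝ) :
    ∫ s in (0 : ℝ)..|t|, g s = ∫ s in (0 : ℝ)..t, g s := by
  rcases abs_choice t with ht | ht
  · rw [ht]
  · rw [ht, ← neg_zero, ← integral_comp_neg, neg_zero]
    simp only [hg, intervalIntegral.integral_neg]
    rw [integral_symm, neg_neg]

theorem integral_integral_abs_eq (κ : ℝ → ℝ) (z : ℝ) :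
    ∫ y in (0 : ℝ)..|z|, ∫ x in (0 : ℝ)..y, κ x =
      ∫ y in (0 : ℝ)..z, ∫ s in (0 : ℝ)..y, κ |s| := by
  have hodd : ∀ t, ∫ s in (0 : ℝ)..-t, κ |s| = -∫ s in (0 : ℝ)..t, κ |s| :=
    integral_zero_neg_of_even fun s => by rw [abs_neg]
  refine Eq.trans ?_
    (integral_zero_abs_of_odd (g := fun y => ∫ s in (0 : ℝ)..y, κ |s|) hodd z)
  refine integral_congr fun y hy => integral_congr fun s hs => ?_
  rw [uIcc_of_le (abs_nonneg z)] at hy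
  rw [uIcc_of_le hy.1] at hs
  rw [abs_of_nonneg hs.1]

theorem hasDerivAt_integral_integral_abs {κ : ℝ → ℝ} (hκ : Continuous κ) (z : ℝ) :
    HasDerivAt (fun z => ∫ y in (0 : ℝ)..|z|, ∫ x in (0 : ℝ)..y, κ x)
      (∫ s in (0 : ℝ)..z, κ |s|) z := by
  simp only [integral_integral_abs_eq]
  have hK : Continuous fun s => κ |s| := hκ.comp continuous_abs
  have hG : Continuous fun y => ∫ s in (0 : ℝ)..y, κ |s| :=
    continuous_primitive (fun _ _ => hK.intervalIntegrable _ _) 0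
  exact (hG.integral_hasStrictDerivAt 0 z).hasDerivAt

theorem taylor_integral_remainder_segment {f f' f'' : ℝ → ℝ}
    (hf : ∀ t, HasDerivAt f (f' t) t) (hf' : ∀ t, HasDerivAt f' (f'' t) t)
    (hf'' : Continuous f'') (z l : ℝ) :
    f (z + l) - f z - f' z * l = ∫ u in (0 : ℝ)..1, (1 - u) * l ^ 2 * f'' (z + u * l) := by
  have hφ : ∀ u : ℝ, HasDerivAt (fun u => f (z + u * l) + (1 - u) * l * f' (z + u * l))
      ((1 - u) * l ^ 2 * f'' (z + u * l)) u := by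
    intro u
    have hseg : HasDerivAt (fun u : ℝ => z + u * l) l u := by
      simpa using ((hasDerivAt_id u).mul_const l).const_add z
    have hf_seg : HasDerivAt (fun u => f (z + u * l)) (f' (z + u * l) * l) u :=
      (hf _).comp u hseg
    have hf'_seg : HasDerivAt (fun u => f' (z + u * l)) (f'' (z + u * l) * l) u :=
      (hf' _).comp u hseg
    have hweight : HasDerivAt (fun u : ℝ => (1 - u) * l) (-1 * l) u :=
      ((hasDerivAt_id' u).const_sub 1).mul_const l
    exact (hf_seg.fun_add (hweight.fun_mul hf'_seg)).congr_deriv (by ring)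
  rw [integral_eq_sub_of_hasDerivAt (fun u _ => hφ u)
    (Continuous.intervalIntegrable (by fun_prop) _ _)]
  simp
  ring

section SameSign

variable {z l : ℝ}

theorem one_sub_mul_abs_le_abs_add_mul (hzl : 0 ≤ z * (z + l)) {u : ℝ}
    (hu : u ∈ Icc (0 : ℝ) 1) : (1 - u) * |z| ≤ |z + u * l| := by
  obtain ⟨hu0, hu1⟩ := hu
  rcases lt_trichotomy z 0 with hz | rfl | hz
  · have hzl' : z + l ≤ 0 := by nlinarith
    rw [abs_of_neg hz, abs_of_nonpos (by nlinarith)]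
    nlinarith
  · simp only [abs_zero, mul_zero, zero_add]
    positivity
  · have hzl' : 0 ≤ z + l := by nlinarith
    rw [abs_of_pos hz, abs_of_nonneg (by nlinarith)]
    nlinarith

theorem add_mul_ne_zero_of_mem_Ico (hz : z ≠ 0) (hzl : 0 ≤ z * (z + l)) {u : ℝ}
    (hu : u ∈ Ico (0 : ℝ) 1) : z + u * l ≠ 0 :=
  abs_pos.1 <| (mul_pos (sub_pos.2 hu.2) (abs_pos.2 hz)).trans_le <|
    one_sub_mul_abs_le_abs_add_mul hzl (Ico_subset_Icc_self hu)

theorem sq_mul_one_sub_div_abs_le (hz : z ≠ 0) (hzl : 0 ≤ z * (z + l)) {u : ℝ}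
    (hu : u ∈ Icc (0 : ℝ) 1) : l ^ 2 * (1 - u) / |z + u * l| ≤ l ^ 2 / |z| := by
  rcases hu.2.eq_or_lt with rfl | hu1
  · simp only [sub_self, mul_zero, zero_div]
    positivity
  · have hu' : 0 < 1 - u := sub_pos.2 hu1
    calc l ^ 2 * (1 - u) / |z + u * l| ≤ l ^ 2 * (1 - u) / ((1 - u) * |z|) :=
          div_le_div_of_nonneg_left (by positivity) (by positivity)
            (one_sub_mul_abs_le_abs_add_mul hzl hu)
      _ = l ^ 2 / |z| := by rw [mul_comm (1 - u), mul_div_mul_right _ _ hu'.ne']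

theorem intervalIntegrable_sq_mul_one_sub_div_abs (hz : z ≠ 0) (hzl : 0 ≤ z * (z + l)) :
    IntervalIntegrable (fun u => l ^ 2 * (1 - u) / |z + u * l|) volume 0 1 := by
  refine (intervalIntegrable_const (c := l ^ 2 / |z|)).mono_fun'
    (Measurable.aestronglyMeasurable (by fun_prop)) ?_
  filter_upwards [ae_restrict_mem measurableSet_uIoc] with u hu
  rw [uIoc_of_le zero_le_one] at hu
  rw [norm_of_nonneg
    (div_nonneg (mul_nonneg (sq_nonneg l) (sub_nonneg.2 hu.2)) (abs_nonneg _))]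
  exact sq_mul_one_sub_div_abs_le hz hzl (Ioc_subset_Icc_self hu)

theorem integral_sq_mul_one_sub_div_abs_le (hz : z ≠ 0) (hzl : 0 ≤ z * (z + l)) :
    ∫ u in (0 : ℝ)..1, l ^ 2 * (1 - u) / |z + u * l| ≤ l ^ 2 / |z| :=
  calc ∫ u in (0 : ℝ)..1, l ^ 2 * (1 - u) / |z + u * l|
      ≤ ∫ _ in (0 : ℝ)..1, l ^ 2 / |z| :=
        integral_mono_on zero_le_one (intervalIntegrable_sq_mul_one_sub_div_abs hz hzl)
          intervalIntegrable_const fun _ hu => sq_mul_one_sub_div_abs_le hz hzl hu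
    _ = l ^ 2 / |z| := by simp

theorem one_sub_mul_sq_mul_le {K : ℝ → ℝ} {c : ℝ} (hK : ∀ w ≠ 0, K w ≤ c / |w|) (hz : z ≠ 0)
    (hzl : 0 ≤ z * (z + l)) {u : ℝ} (hu : u ∈ Icc (0 : ℝ) 1) :
    (1 - u) * l ^ 2 * K (z + u * l) ≤ c * (l ^ 2 * (1 - u) / |z + u * l|) := by
  rcases hu.2.eq_or_lt with rfl | hu1
  · simp
  · calc (1 - u) * l ^ 2 * K (z + u * l) ≤ (1 - u) * l ^ 2 * (c / |z + u * l|) :=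
          mul_le_mul_of_nonneg_left (hK _ (add_mul_ne_zero_of_mem_Ico hz hzl ⟨hu.1, hu1⟩))
            (mul_nonneg (sub_nonneg.2 hu.2) (sq_nonneg l))
      _ = c * (l ^ 2 * (1 - u) / |z + u * l|) := by ring

end SameSign

theorem stmt_3_general (ℓ : ℝ) (hℓ : 0 < ℓ)
    (κ : ℝ → ℝ) (hκc : Continuous κ)
    (hκbd : ∀ x > (0:ℝ), κ x ≤ 2 / (ℓ * x))
    (f : ℝ → ℝ)
    (hf : ∀ z, f z = ∫ y in (0:ℝ)..|z|, ∫ x in (0:ℝ)..y, κ x)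
    (h : ℝ → ℝ) (hmono : Monotone fun x => x + h x)
    (x y : ℝ) (hxy : x ≠ y) :
    f (x - y + (h x - h y)) - f (x - y) - deriv f (x - y) * (h x - h y) ≤
        (2 / ℓ) * ∫ u in (0:ℝ)..1, (h x - h y) ^ 2 * (1 - u) / |x - y + u * (h x - h y)| ∧
      (2 / ℓ) * (∫ u in (0:ℝ)..1, (h x - h y) ^ 2 * (1 - u) / |x - y + u * (h x - h y)|) ≤
        2 * (h x - h y) ^ 2 / (ℓ * |x - y|) := by
  obtain rfl : f = _ := funext hf
  have hz : x - y ≠ 0 := sub_ne_zero.2 hxy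
  have hzl : 0 ≤ (x - y) * (x - y + (h x - h y)) :=
    ((monovary_id_iff.2 hmono).sub_mul_sub_nonneg y x).trans_eq (by simp only [id]; ring)
  have hK : ∀ w ≠ 0, κ |w| ≤ 2 / ℓ / |w| := fun w hw => by
    rw [div_div]
    exact hκbd _ (abs_pos.2 hw)
  have hκabs : Continuous fun s => κ |s| := hκc.comp continuous_abs
  have hf' := hasDerivAt_integral_integral_abs hκc
  constructor
  · rw [(hf' _).deriv, taylor_integral_remainder_segment hf'
      (fun t => (hκabs.integral_hasStrictDerivAt 0 t).hasDerivAt) hκabs,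
      ← intervalIntegral.integral_const_mul]
    exact integral_mono_on zero_le_one (Continuous.intervalIntegrable (by fun_prop) _ _)
      ((intervalIntegrable_sq_mul_one_sub_div_abs hz hzl).const_mul _)
      fun u hu => one_sub_mul_sq_mul_le hK hz hzl hu
  · calc _ ≤ 2 / ℓ * ((h x - h y) ^ 2 / |x - y|) :=
          mul_le_mul_of_nonneg_left (integral_sq_mul_one_sub_div_abs_le hz hzl) (by positivity)
      _ = _ := div_mul_div_comm _ _ _ _

theorem stmt_3 (a b ℓ : ℝ) (ha : 0 < a) (hab : a < b) (hℓ : 0 < ℓ)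
    (κ : ℝ → ℝ) (hκc : Continuous κ) (hκ0 : ∀ x, 0 ≤ κ x)
    (hκsupp : ∀ x, x ∉ Set.Ioo a b → κ x = 0)
    (hκint : ∫ x in a..b, κ x = 1)
    (hκbd : ∀ x > (0:ℝ), κ x ≤ 2 / (ℓ * x))
    (f : ℝ → ℝ)
    (hf : ∀ z, f z = ∫ y in (0:ℝ)..|z|, ∫ x in (0:ℝ)..y, κ x)
    (h : ℝ → ℝ) (hmono : Monotone fun x => x + h x)
    (x y : ℝ) (hxy : x ≠ y) :
    f (x - y + (h x - h y)) - f (x - y) - deriv f (x - y) * (h x - h y) ≤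
        (2 / ℓ) * ∫ u in (0:ℝ)..1, (h x - h y) ^ 2 * (1 - u) / |x - y + u * (h x - h y)| ∧
      (2 / ℓ) * (∫ u in (0:ℝ)..1, (h x - h y) ^ 2 * (1 - u) / |x - y + u * (h x - h y)|) ≤
        2 * (h x - h y) ^ 2 / (ℓ * |x - y|) :=
  stmt_3_general ℓ hℓ κ hκc hκbd f hf h hmono x y hxy
end

section
/- Let μ be a Borel measure on (0,∞) with ∫_{(0,∞)} min(x, x²) μ(dx) < ∞, γ ≥ 0, and ψ₀(θ) = γ²θ² + ∫_{(0,∞)} (e^{−θx} − 1 + θx) μ(dx). Let t > 0, λ ≥ 0, and let K : [0,t] → ℝ be continuous. Then there exists a unique differentiable function v : [0,t] → [0,λ] with v(t) = λ and v'(s) = e^{K(s)} ψ₀(v(s) e^{−K(s)}) for all s ∈ [0,t]; moreover this v is nondecreasing on [0,t]. -/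
/-!
`ψ₀` vanishes at `0`, is nondecreasing on `[0, ∞)` and Lipschitz on every `[0, M]`: the integrand
`e^{-θx} - 1 + θx` increases in `θ`, with `θ`-slope at most `max 1 M * min x (x ^ 2)`. Clamping the
state to `[0, λ]` turns the right-hand side into a bounded, globally Lipschitz field, so
Picard–Lindelöf gives a solution with `v t = λ`, and Gronwall gives uniqueness. The field is
nonnegative, so the solution is nondecreasing and stays below `λ`; it vanishes at negative states,
which are therefore equilibria, so a negative value could never reach `v t = λ ≥ 0`.
-/

open Real MeasureTheory Set NNReal

lemma exp_neg_sub_one_add_monotoneOn : MonotoneOn (fun a => exp (-a) - 1 + a) (Ici 0) := by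
  intro b hb a _ hba
  have hfactor : exp (-a) = exp (-b) * exp (-(a - b)) := by rw [← exp_add]; ring_nf
  have hb_le : exp (-b) ≤ 1 := exp_le_one_iff.2 (by linarith [mem_Ici.1 hb])
  have hd_le : exp (-(a - b)) ≤ 1 := exp_le_one_iff.2 (by linarith)
  dsimp only
  nlinarith [exp_pos (-b), add_one_le_exp (-(a - b))]

lemma exp_neg_sub_one_add_sub_le {a b : ℝ} (hba : b ≤ a) :
    (exp (-a) - 1 + a) - (exp (-b) - 1 + b) ≤ min 1 a * (a - b) := by
  -- convexity: the increment is at most the slope `1 - exp (-a)` at the right end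
  have hconv : (exp (-a) - 1 + a) - (exp (-b) - 1 + b) ≤ (1 - exp (-a)) * (a - b) := by
    have hfactor : exp (-b) = exp (-a) * exp (a - b) := by rw [← exp_add]; ring_nf
    nlinarith [add_one_le_exp (a - b), exp_pos (-a)]
  have hslope : 1 - exp (-a) ≤ min 1 a := le_min (by linarith [exp_pos (-a)])
    (by linarith [add_one_le_exp (-a)])
  exact hconv.trans (mul_le_mul_of_nonneg_right hslope (by linarith))

lemma min_one_mul_mul_le {θ x : ℝ} (hx : 0 ≤ x) :
    min 1 (θ * x) * x ≤ max 1 θ * min x (x ^ 2) := by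
  rcases le_total x 1 with hx1 | hx1
  · rw [min_eq_right (by nlinarith : x ^ 2 ≤ x)]
    calc min 1 (θ * x) * x ≤ θ * x * x := by gcongr; exact min_le_right _ _
      _ ≤ max 1 θ * x ^ 2 := by nlinarith [le_max_right 1 θ]
  · rw [min_eq_left (by nlinarith : x ≤ x ^ 2)]
    calc min 1 (θ * x) * x ≤ 1 * x := by gcongr; exact min_le_left _ _
      _ ≤ max 1 θ * x := by gcongr; exact le_max_left 1 θ

noncomputable def levyIntegrand (θ x : ℝ) : ℝ := exp (-θ * x) - 1 + θ * x

noncomputable def laplaceExponent (μ : Measure ℝ) (γ θ : ℝ) : ℝ :=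
  γ ^ 2 * θ ^ 2 + ∫ x in Ioi 0, levyIntegrand θ x ∂μ

lemma levyIntegrand_zero_left (x : ℝ) : levyIntegrand 0 x = 0 := by simp [levyIntegrand]

lemma levyIntegrand_le_levyIntegrand {θ₁ θ₂ x : ℝ} (hθ₂ : 0 ≤ θ₂) (h : θ₂ ≤ θ₁) (hx : 0 ≤ x) :
    levyIntegrand θ₂ x ≤ levyIntegrand θ₁ x := by
  simp only [levyIntegrand, neg_mul]
  exact exp_neg_sub_one_add_monotoneOn (mul_nonneg hθ₂ hx) (mul_nonneg (hθ₂.trans h) hx)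
    (mul_le_mul_of_nonneg_right h hx)

lemma levyIntegrand_sub_le {θ₁ θ₂ x : ℝ} (h : θ₂ ≤ θ₁) (hx : 0 ≤ x) :
    levyIntegrand θ₁ x - levyIntegrand θ₂ x ≤ (θ₁ - θ₂) * (max 1 θ₁ * min x (x ^ 2)) := by
  simp only [levyIntegrand, neg_mul]
  calc _ ≤ min 1 (θ₁ * x) * (θ₁ * x - θ₂ * x) :=
        exp_neg_sub_one_add_sub_le (mul_le_mul_of_nonneg_right h hx)
    _ = (θ₁ - θ₂) * (min 1 (θ₁ * x) * x) := by ring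
    _ ≤ (θ₁ - θ₂) * (max 1 θ₁ * min x (x ^ 2)) :=
        mul_le_mul_of_nonneg_left (min_one_mul_mul_le hx) (sub_nonneg.2 h)

section LaplaceExponent

variable {μ : Measure ℝ} {γ : ℝ}

lemma laplaceExponent_zero : laplaceExponent μ γ 0 = 0 := by
  simp [laplaceExponent, levyIntegrand_zero_left]

variable (hμ : IntegrableOn (fun x => min x (x ^ 2)) (Ioi 0) μ)
include hμ

lemma integrableOn_levyIntegrand {θ : ℝ} (hθ : 0 ≤ θ) :
    IntegrableOn (levyIntegrand θ) (Ioi 0) μ := by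
  refine (hμ.const_mul (θ * max 1 θ)).mono'
    (Continuous.aestronglyMeasurable (by unfold levyIntegrand; fun_prop)) ?_
  refine (ae_restrict_iff' measurableSet_Ioi).2 (ae_of_all _ fun x (hx : 0 < x) => ?_)
  have hle := levyIntegrand_sub_le hθ hx.le
  have hnn := levyIntegrand_le_levyIntegrand le_rfl hθ hx.le
  rw [levyIntegrand_zero_left] at hle hnn
  rw [Real.norm_eq_abs, abs_of_nonneg hnn]
  linarith

lemma monotoneOn_laplaceExponent : MonotoneOn (laplaceExponent μ γ) (Ici 0) := by
  intro θ₂ (hθ₂ : 0 ≤ θ₂) θ₁ _ h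
  have hsq : θ₂ ^ 2 ≤ θ₁ ^ 2 := pow_le_pow_left₀ hθ₂ h 2
  have hint : ∫ x in Ioi 0, levyIntegrand θ₂ x ∂μ ≤ ∫ x in Ioi 0, levyIntegrand θ₁ x ∂μ :=
    setIntegral_mono_on (integrableOn_levyIntegrand hμ hθ₂)
      (integrableOn_levyIntegrand hμ (hθ₂.trans h)) measurableSet_Ioi
      fun x hx => levyIntegrand_le_levyIntegrand hθ₂ h (le_of_lt hx)
  unfold laplaceExponent
  gcongr

lemma laplaceExponent_sub_le {θ₁ θ₂ M : ℝ} (hθ₂ : 0 ≤ θ₂) (h : θ₂ ≤ θ₁) (hM : θ₁ ≤ M) :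
    laplaceExponent μ γ θ₁ - laplaceExponent μ γ θ₂ ≤
      (2 * γ ^ 2 * M + max 1 M * ∫ x in Ioi 0, min x (x ^ 2) ∂μ) * (θ₁ - θ₂) := by
  have hint : ∫ x in Ioi 0, levyIntegrand θ₁ x ∂μ - ∫ x in Ioi 0, levyIntegrand θ₂ x ∂μ ≤
      (θ₁ - θ₂) * max 1 M * ∫ x in Ioi 0, min x (x ^ 2) ∂μ := by
    rw [← integral_sub (integrableOn_levyIntegrand hμ (hθ₂.trans h))
      (integrableOn_levyIntegrand hμ hθ₂), ← integral_const_mul]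
    refine setIntegral_mono_on ((integrableOn_levyIntegrand hμ (hθ₂.trans h)).sub
      (integrableOn_levyIntegrand hμ hθ₂)) (hμ.const_mul _) measurableSet_Ioi fun x hx => ?_
    calc levyIntegrand θ₁ x - levyIntegrand θ₂ x
        ≤ (θ₁ - θ₂) * (max 1 θ₁ * min x (x ^ 2)) := levyIntegrand_sub_le h (le_of_lt hx)
      _ ≤ (θ₁ - θ₂) * (max 1 M * min x (x ^ 2)) := by
        have : 0 ≤ min x (x ^ 2) := le_min (le_of_lt hx) (sq_nonneg x)
        have : 0 ≤ θ₁ - θ₂ := sub_nonneg.2 h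
        gcongr
      _ = (θ₁ - θ₂) * max 1 M * min x (x ^ 2) := by ring
  have hsq : θ₁ ^ 2 - θ₂ ^ 2 ≤ 2 * M * (θ₁ - θ₂) := by nlinarith
  have := mul_le_mul_of_nonneg_left hsq (sq_nonneg γ)
  unfold laplaceExponent
  nlinarith

lemma lipschitzOnWith_laplaceExponent (M : ℝ) :
    ∃ L, LipschitzOnWith L (laplaceExponent μ γ) (Icc 0 M) := by
  have hI : 0 ≤ ∫ x in Ioi 0, min x (x ^ 2) ∂μ :=
    setIntegral_nonneg measurableSet_Ioi fun x hx => le_min (le_of_lt hx) (sq_nonneg x)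
  refine ⟨_, LipschitzOnWith.of_le_add_mul'
    (2 * γ ^ 2 * M + max 1 M * ∫ x in Ioi 0, min x (x ^ 2) ∂μ) fun θ₁ h₁ θ₂ h₂ => ?_⟩
  have hL : 0 ≤ 2 * γ ^ 2 * M + max 1 M * ∫ x in Ioi 0, min x (x ^ 2) ∂μ := by
    have := h₁.1.trans h₁.2
    positivity
  rw [Real.dist_eq]
  rcases le_total θ₁ θ₂ with h | h
  · have := monotoneOn_laplaceExponent hμ (γ := γ) h₁.1 h₂.1 h
    nlinarith [abs_nonneg (θ₁ - θ₂)]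
  · have := laplaceExponent_sub_le hμ (γ := γ) h₂.1 h h₁.2
    rw [abs_of_nonneg (sub_nonneg.2 h)]
    linarith

end LaplaceExponent

section ODE

variable {E : Type*} [NormedAddCommGroup E] [NormedSpace ℝ E]
  {F : ℝ → E → E} {L : ℝ≥0} {a b : ℝ}

theorem exists_forall_mem_Icc_hasDerivWithinAt_of_lipschitzWith [CompleteSpace E] {C : ℝ≥0}
    (hlip : ∀ s, LipschitzWith L (F s)) (hcont : ∀ y, Continuous (F · y))
    (hbdd : ∀ s y, ‖F s y‖ ≤ C) {t₀ : ℝ} (ht₀ : t₀ ∈ Icc a b) (y₀ : E) :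
    ∃ u : ℝ → E, u t₀ = y₀ ∧ ∀ s ∈ Icc a b, HasDerivWithinAt u (F s (u s)) (Icc a b) s := by
  have hpl : IsPicardLindelof F ⟨t₀, ht₀⟩ y₀ (C * max (b - t₀) (t₀ - a)).toNNReal 0 C L :=
    { lipschitzOnWith := fun s _ => (hlip s).lipschitzOnWith
      continuousOn := fun y _ => (hcont y).continuousOn
      norm_le := fun s _ y _ => hbdd s y
      mul_max_le := by simp }
  exact hpl.exists_eq_forall_mem_Icc_hasDerivWithinAt₀

lemma eqOn_Icc_of_hasDerivWithinAt_of_eq_left {u w : ℝ → E} (hlip : ∀ s, LipschitzWith L (F s))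
    (hu : ∀ s ∈ Icc a b, HasDerivWithinAt u (F s (u s)) (Icc a b) s)
    (hw : ∀ s ∈ Icc a b, HasDerivWithinAt w (F s (w s)) (Icc a b) s) (ha : u a = w a) :
    EqOn u w (Icc a b) :=
  ODE_solution_unique_of_mem_Icc_right (s := fun _ => univ) (fun s _ => (hlip s).lipschitzOnWith)
    (fun s hs => (hu s hs).continuousWithinAt)
    (fun s hs => (hu s (Ico_subset_Icc_self hs)).mono_of_mem_nhdsWithin (Icc_mem_nhdsGE_of_mem hs))
    (fun _ _ => mem_univ _) (fun s hs => (hw s hs).continuousWithinAt)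
    (fun s hs => (hw s (Ico_subset_Icc_self hs)).mono_of_mem_nhdsWithin (Icc_mem_nhdsGE_of_mem hs))
    (fun _ _ => mem_univ _) ha

lemma eqOn_Icc_of_hasDerivWithinAt_of_eq_right {u w : ℝ → E} (hlip : ∀ s, LipschitzWith L (F s))
    (hu : ∀ s ∈ Icc a b, HasDerivWithinAt u (F s (u s)) (Icc a b) s)
    (hw : ∀ s ∈ Icc a b, HasDerivWithinAt w (F s (w s)) (Icc a b) s) (hb : u b = w b) :
    EqOn u w (Icc a b) :=
  ODE_solution_unique_of_mem_Icc_left (s := fun _ => univ) (fun s _ => (hlip s).lipschitzOnWith)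
    (fun s hs => (hu s hs).continuousWithinAt)
    (fun s hs => (hu s (Ioc_subset_Icc_self hs)).mono_of_mem_nhdsWithin (Icc_mem_nhdsLE_of_mem hs))
    (fun _ _ => mem_univ _) (fun s hs => (hw s hs).continuousWithinAt)
    (fun s hs => (hw s (Ioc_subset_Icc_self hs)).mono_of_mem_nhdsWithin (Icc_mem_nhdsLE_of_mem hs))
    (fun _ _ => mem_univ _) hb

end ODE

lemma monotoneOn_Icc_of_hasDerivWithinAt_nonneg {f f' : ℝ → ℝ} {a b : ℝ}
    (hf : ∀ s ∈ Icc a b, HasDerivWithinAt f (f' s) (Icc a b) s) (hf' : ∀ s ∈ Ioo a b, 0 ≤ f' s) :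
    MonotoneOn f (Icc a b) := by
  refine monotoneOn_of_hasDerivWithinAt_nonneg (convex_Icc a b)
    (fun s hs => (hf s hs).continuousWithinAt) (fun s hs => ?_) (by simpa using hf')
  rw [interior_Icc] at hs ⊢
  exact (hf s (Ioo_subset_Icc_self hs)).mono Ioo_subset_Icc_self

lemma nonneg_of_hasDerivWithinAt_of_forall_neg_eq_zero {F : ℝ → ℝ → ℝ} {L : ℝ≥0} {a b : ℝ}
    {u : ℝ → ℝ} (hlip : ∀ s, LipschitzWith L (F s)) (hF : ∀ s y, y < 0 → F s y = 0)
    (hu : ∀ s ∈ Icc a b, HasDerivWithinAt u (F s (u s)) (Icc a b) s) (hb : 0 ≤ u b)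
    {s : ℝ} (hs : s ∈ Icc a b) : 0 ≤ u s := by
  by_contra! hneg
  -- a negative value is an equilibrium, so the solution through it stays there up to time `b`
  have hconst : EqOn u (fun _ => u s) (Icc s b) :=
    eqOn_Icc_of_hasDerivWithinAt_of_eq_left hlip
      (fun r hr => (hu r ⟨hs.1.trans hr.1, hr.2⟩).mono (Icc_subset_Icc hs.1 le_rfl))
      (fun r _ => by simpa only [hF r _ hneg] using hasDerivWithinAt_const r (Icc s b) (u s)) rfl
  linarith [hconst ⟨hs.2, le_rfl⟩]

lemma exists_continuous_eqOn_Icc_abs_le {K : ℝ → ℝ} {a b : ℝ} (hab : a ≤ b)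
    (hK : ContinuousOn K (Icc a b)) :
    ∃ k : ℝ → ℝ, Continuous k ∧ EqOn k K (Icc a b) ∧ ∃ B, ∀ s, |k s| ≤ B := by
  obtain ⟨B, hB⟩ := isCompact_Icc.exists_bound_of_continuousOn hK
  exact ⟨IccExtend hab ((Icc a b).domRestrict K),
    (continuousOn_iff_continuous_domRestrict.1 hK).Icc_extend',
    fun s hs => IccExtend_of_mem hab _ hs, B, fun s => hB _ (projIcc a b hab s).2⟩

section BackwardField

noncomputable def backwardField (ψ k : ℝ → ℝ) {lam : ℝ} (hlam : 0 ≤ lam) (s y : ℝ) : ℝ :=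
  exp (k s) * ψ (projIcc 0 lam hlam y * exp (-k s))

variable {ψ k : ℝ → ℝ} {lam B : ℝ} (hlam : 0 ≤ lam)

lemma mul_exp_neg_mem_Icc {c x : ℝ} (hc : c ∈ Icc 0 lam) (hx : |x| ≤ B) :
    c * exp (-x) ∈ Icc 0 (lam * exp B) :=
  ⟨mul_nonneg hc.1 (exp_pos _).le,
    mul_le_mul hc.2 (exp_le_exp.2 ((neg_le_abs x).trans hx)) (exp_pos _).le (hc.1.trans hc.2)⟩

include hlam

lemma backwardField_of_mem {s y : ℝ} (hy : y ∈ Icc 0 lam) :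
    backwardField ψ k hlam s y = exp (k s) * ψ (y * exp (-k s)) := by
  rw [backwardField, projIcc_of_mem _ hy]

lemma backwardField_of_neg (hψ₀ : ψ 0 = 0) (s : ℝ) {y : ℝ} (hy : y < 0) :
    backwardField ψ k hlam s y = 0 := by
  rw [backwardField, projIcc_of_le_left _ hy.le]
  simp [hψ₀]

lemma backwardField_nonneg (hψ₀ : ψ 0 = 0) (hψ : MonotoneOn ψ (Ici 0)) (s y : ℝ) :
    0 ≤ backwardField ψ k hlam s y := by
  have hθ : 0 ≤ (projIcc 0 lam hlam y : ℝ) * exp (-k s) :=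
    mul_nonneg (projIcc 0 lam hlam y).2.1 (exp_pos _).le
  exact mul_nonneg (exp_pos _).le (hψ₀.symm.le.trans (hψ self_mem_Ici hθ hθ))

lemma backwardField_le (hψ₀ : ψ 0 = 0) (hψ : MonotoneOn ψ (Ici 0)) (hk : ∀ s, |k s| ≤ B)
    (s y : ℝ) : backwardField ψ k hlam s y ≤ exp B * ψ (lam * exp B) := by
  have hθ := mul_exp_neg_mem_Icc (projIcc 0 lam hlam y).2 (hk s)
  have hψθ : 0 ≤ ψ (projIcc 0 lam hlam y * exp (-k s)) :=
    hψ₀.symm.le.trans (hψ self_mem_Ici hθ.1 hθ.1)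
  exact mul_le_mul (exp_le_exp.2 (le_of_abs_le (hk s))) (hψ hθ.1 (hθ.1.trans hθ.2) hθ.2) hψθ
    (exp_pos _).le

lemma lipschitzWith_backwardField {L : ℝ≥0} (hψ : LipschitzOnWith L ψ (Icc 0 (lam * exp B)))
    (hk : ∀ s, |k s| ≤ B) (s : ℝ) : LipschitzWith L (backwardField ψ k hlam s) := by
  refine LipschitzWith.of_le_add_mul L fun y₁ y₂ => ?_
  have hθ y := mul_exp_neg_mem_Icc (projIcc 0 lam hlam y).2 (hk s)
  -- the factors `exp (k s)` and `exp (-k s)` cancel in the Lipschitz constant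
  have hdist : exp (k s) * dist (projIcc 0 lam hlam y₁ * exp (-k s) : ℝ)
      (projIcc 0 lam hlam y₂ * exp (-k s)) ≤ dist y₁ y₂ := by
    rw [Real.dist_eq, ← sub_mul, abs_mul, abs_of_pos (exp_pos _), mul_left_comm, ← exp_add,
      add_neg_cancel, exp_zero, mul_one]
    exact abs_projIcc_sub_projIcc hlam
  calc backwardField ψ k hlam s y₁
      ≤ exp (k s) * (ψ (projIcc 0 lam hlam y₂ * exp (-k s)) + L * dist
          (projIcc 0 lam hlam y₁ * exp (-k s) : ℝ) (projIcc 0 lam hlam y₂ * exp (-k s))) :=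
        mul_le_mul_of_nonneg_left (hψ.le_add_mul (hθ y₁) (hθ y₂)) (exp_pos _).le
    _ ≤ backwardField ψ k hlam s y₂ + L * dist y₁ y₂ := by
        rw [mul_add, mul_left_comm]
        exact add_le_add le_rfl (mul_le_mul_of_nonneg_left hdist L.2)

lemma continuous_backwardField {L : ℝ≥0} (hψ : LipschitzOnWith L ψ (Icc 0 (lam * exp B)))
    (hk : ∀ s, |k s| ≤ B) (hkc : Continuous k) (y : ℝ) :
    Continuous (backwardField ψ k hlam · y) :=
  (hkc.rexp).mul <| hψ.continuousOn.comp_continuous (by fun_prop)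
    fun s => mul_exp_neg_mem_Icc (projIcc 0 lam hlam y).2 (hk s)

end BackwardField

theorem exists_unique_backward_solution {ψ : ℝ → ℝ} (hψ₀ : ψ 0 = 0) (hψ : MonotoneOn ψ (Ici 0))
    (hψL : ∀ M, ∃ L, LipschitzOnWith L ψ (Icc 0 M)) {t lam : ℝ} (ht : 0 ≤ t) (hlam : 0 ≤ lam)
    {K : ℝ → ℝ} (hK : ContinuousOn K (Icc 0 t)) :
    ∃ v : ℝ → ℝ,
      ((∀ s ∈ Icc (0:ℝ) t, v s ∈ Icc 0 lam) ∧ v t = lam ∧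
        (∀ s ∈ Icc (0:ℝ) t,
          HasDerivWithinAt v (exp (K s) * ψ (v s * exp (-K s))) (Icc 0 t) s) ∧
        MonotoneOn v (Icc 0 t)) ∧
      ∀ w : ℝ → ℝ,
        ((∀ s ∈ Icc (0:ℝ) t, w s ∈ Icc 0 lam) ∧ w t = lam ∧
          (∀ s ∈ Icc (0:ℝ) t,
            HasDerivWithinAt w (exp (K s) * ψ (w s * exp (-K s))) (Icc 0 t) s)) →
        EqOn v w (Icc 0 t) := by
  obtain ⟨k, hkc, hkK, B, hB⟩ := exists_continuous_eqOn_Icc_abs_le ht hK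
  obtain ⟨L, hL⟩ := hψL (lam * exp B)
  set F := backwardField ψ k hlam
  have hFL : ∀ s, LipschitzWith L (F s) := lipschitzWith_backwardField hlam hL hB
  have hFC : ∀ s y, ‖F s y‖ ≤ (exp B * ψ (lam * exp B)).toNNReal := fun s y => by
    rw [Real.norm_of_nonneg (backwardField_nonneg hlam hψ₀ hψ s y)]
    exact (backwardField_le hlam hψ₀ hψ hB s y).trans (Real.le_coe_toNNReal _)
  obtain ⟨u, hut, hu⟩ := exists_forall_mem_Icc_hasDerivWithinAt_of_lipschitzWith hFL
    (continuous_backwardField hlam hL hB hkc) hFC (right_mem_Icc.2 ht) lam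
  have hu_mono : MonotoneOn u (Icc 0 t) :=
    monotoneOn_Icc_of_hasDerivWithinAt_nonneg hu fun s _ => backwardField_nonneg hlam hψ₀ hψ _ _
  have hu_mem : ∀ s ∈ Icc 0 t, u s ∈ Icc 0 lam := fun s hs =>
    ⟨nonneg_of_hasDerivWithinAt_of_forall_neg_eq_zero hFL (backwardField_of_neg hlam hψ₀) hu
      (hut ▸ hlam) hs, hut ▸ hu_mono hs (right_mem_Icc.2 ht) hs.2⟩
  have hF_eq : ∀ w : ℝ → ℝ, (∀ s ∈ Icc 0 t, w s ∈ Icc 0 lam) → ∀ s ∈ Icc 0 t,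
      F s (w s) = exp (K s) * ψ (w s * exp (-K s)) := fun w hw s hs =>
    (backwardField_of_mem hlam (hw s hs)).trans (by rw [hkK hs])
  refine ⟨u, ⟨hu_mem, hut, fun s hs => hF_eq u hu_mem s hs ▸ hu s hs, hu_mono⟩, ?_⟩
  rintro w ⟨hw, hwt, hw'⟩
  exact eqOn_Icc_of_hasDerivWithinAt_of_eq_right hFL hu
    (fun s hs => (hF_eq w hw s hs).symm ▸ hw' s hs) (hut.trans hwt.symm)

theorem stmt_8_general (μ : Measure ℝ) (γ : ℝ)
    (hμ : IntegrableOn (fun x => min x (x ^ 2)) (Set.Ioi 0) μ)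
    (ψ₀ : ℝ → ℝ)
    (hψ : ∀ θ, ψ₀ θ = γ ^ 2 * θ ^ 2 +
      ∫ x in Set.Ioi (0:ℝ), (Real.exp (-θ * x) - 1 + θ * x) ∂μ)
    (t lam : ℝ) (ht : 0 < t) (hlam : 0 ≤ lam)
    (K : ℝ → ℝ) (hK : ContinuousOn K (Set.Icc 0 t)) :
    ∃ v : ℝ → ℝ,
      ((∀ s ∈ Set.Icc (0:ℝ) t, v s ∈ Set.Icc 0 lam) ∧ v t = lam ∧
        (∀ s ∈ Set.Icc (0:ℝ) t,
          HasDerivWithinAt v (Real.exp (K s) * ψ₀ (v s * Real.exp (-K s)))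
            (Set.Icc 0 t) s) ∧
        MonotoneOn v (Set.Icc 0 t)) ∧
      ∀ w : ℝ → ℝ,
        ((∀ s ∈ Set.Icc (0:ℝ) t, w s ∈ Set.Icc 0 lam) ∧ w t = lam ∧
          (∀ s ∈ Set.Icc (0:ℝ) t,
            HasDerivWithinAt w (Real.exp (K s) * ψ₀ (w s * Real.exp (-K s)))
              (Set.Icc 0 t) s)) →
        Set.EqOn v w (Set.Icc 0 t) := by
  obtain rfl : ψ₀ = laplaceExponent μ γ := funext hψ
  exact exists_unique_backward_solution laplaceExponent_zero (monotoneOn_laplaceExponent hμ)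
    (lipschitzOnWith_laplaceExponent hμ) ht.le hlam hK

theorem stmt_8 (μ : Measure ℝ) (γ : ℝ) (hγ : 0 ≤ γ)
    (hμ : IntegrableOn (fun x => min x (x ^ 2)) (Set.Ioi 0) μ)
    (ψ₀ : ℝ → ℝ)
    (hψ : ∀ θ, ψ₀ θ = γ ^ 2 * θ ^ 2 +
      ∫ x in Set.Ioi (0:ℝ), (Real.exp (-θ * x) - 1 + θ * x) ∂μ)
    (t lam : ℝ) (ht : 0 < t) (hlam : 0 ≤ lam)
    (K : ℝ → ℝ) (hK : ContinuousOn K (Set.Icc 0 t)) :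
    ∃ v : ℝ → ℝ,
      ((∀ s ∈ Set.Icc (0:ℝ) t, v s ∈ Set.Icc 0 lam) ∧ v t = lam ∧
        (∀ s ∈ Set.Icc (0:ℝ) t,
          HasDerivWithinAt v (Real.exp (K s) * ψ₀ (v s * Real.exp (-K s)))
            (Set.Icc 0 t) s) ∧
        MonotoneOn v (Set.Icc 0 t)) ∧
      ∀ w : ℝ → ℝ,
        ((∀ s ∈ Set.Icc (0:ℝ) t, w s ∈ Set.Icc 0 lam) ∧ w t = lam ∧
          (∀ s ∈ Set.Icc (0:ℝ) t,
            HasDerivWithinAt w (Real.exp (K s) * ψ₀ (w s * Real.exp (-K s)))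
              (Set.Icc 0 t) s)) →
        Set.EqOn v w (Set.Icc 0 t) :=
  stmt_8_general μ γ hμ ψ₀ hψ t lam ht hlam K hK
end

section
/- Let μ be a Borel measure on (0,∞) with ∫_{(0,∞)} min(x, x²) μ(dx) < ∞, γ ≥ 0, and ψ₀(θ) = γ²θ² + ∫_{(0,∞)} (e^{−θx} − 1 + θx) μ(dx). Let t > 0, λ > 0, and let K, K̃ : [0,t] → ℝ be continuous. Let v, ṽ : [0,t] → [0,λ] be differentiable with v(t) = ṽ(t) = λ, v'(s) = e^{K(s)} ψ₀(v(s) e^{−K(s)}) and ṽ'(s) = e^{K̃(s)} ψ₀(ṽ(s) e^{−K̃(s)}) for all s ∈ [0,t]. Set S = max_{s∈[0,t]} max(e^{K(s)}, e^{−K(s)}, e^{K̃(s)}, e^{−K̃(s)}), C = ψ₀'(λS), and δ = max_{s∈[0,t]} max(|e^{K(s)} − e^{K̃(s)}|, |e^{−K(s)} − e^{−K̃(s)}|). Then for every s ∈ [0,t], |v(s) − ṽ(s)| ≤ t (SCλ + S ψ₀(Sλ)) δ e^{Ct}. -/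
/-!
On `[0, λS]` the convex, nondecreasing `ψ₀` is `C`-Lipschitz, `C` being its derivative at the right
endpoint. Changing one of `v`, `e^{-K}`, `e^{K}` at a time in `e^K ψ₀(v e^{-K})` therefore bounds
the difference of the two vector fields by `C |v - ṽ| + (SCλ + Sψ₀(Sλ)) δ`, and Grönwall's
inequality, run backwards from the common terminal value at `t`, gives the estimate.
-/

open Real MeasureTheory Set

lemma exp_neg_sub_one_add_nonneg (u : ℝ) : 0 ≤ exp (-u) - 1 + u := by
  linarith [add_one_le_exp (-u)]

lemma one_sub_exp_neg_le_min (u : ℝ) : 1 - exp (-u) ≤ min 1 u :=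
  le_min (by linarith [exp_pos (-u)]) (by linarith [add_one_le_exp (-u)])

lemma exp_neg_sub_one_add_le_sq {u : ℝ} (hu : 0 ≤ u) : exp (-u) - 1 + u ≤ u ^ 2 := by
  have h1 : exp (-u) * (1 + u) ≤ 1 := by
    calc exp (-u) * (1 + u) ≤ exp (-u) * exp u := by gcongr; linarith [add_one_le_exp u]
      _ = 1 := by rw [← exp_add, neg_add_cancel, exp_zero]
  nlinarith [exp_pos (-u)]

lemma exp_neg_sub_one_add_le_of_le {u w : ℝ} (hu : 0 ≤ u) (huw : u ≤ w) :
    exp (-u) - 1 + u ≤ exp (-w) - 1 + w := by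
  have hsplit : exp (-w) = exp (-u) * exp (-(w - u)) := by rw [← exp_add]; ring_nf
  have hu1 : exp (-u) ≤ 1 := exp_le_one_iff.2 (by linarith)
  have hwu1 : exp (-(w - u)) ≤ 1 := exp_le_one_iff.2 (by linarith)
  have hwu : 1 - exp (-(w - u)) ≤ w - u := by linarith [add_one_le_exp (-(w - u))]
  nlinarith [mul_le_mul_of_nonneg_right hu1 (sub_nonneg.2 hwu1)]

lemma exp_neg_mul_sub_one_add_mul_le {θ x : ℝ} (hθ : 0 ≤ θ) (hx : 0 ≤ x) :
    exp (-θ * x) - 1 + θ * x ≤ max θ (θ ^ 2) * min x (x ^ 2) := by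
  rw [neg_mul]
  rcases le_total x 1 with h | h
  · rw [min_eq_right (by nlinarith)]
    calc exp (-(θ * x)) - 1 + θ * x ≤ θ ^ 2 * x ^ 2 := by
          simpa [mul_pow] using exp_neg_sub_one_add_le_sq (mul_nonneg hθ hx)
      _ ≤ _ := by gcongr; exact le_max_right _ _
  · rw [min_eq_left (by nlinarith)]
    calc exp (-(θ * x)) - 1 + θ * x ≤ θ * x := by
          linarith [exp_le_one_iff.2 (neg_nonpos.2 (mul_nonneg hθ hx))]
      _ ≤ _ := by gcongr; exact le_max_left _ _

lemma abs_sub_mul_exp_neg_mul_le {θ x : ℝ} (hθ : 0 ≤ θ) (hx : 0 ≤ x) :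
    |x - x * exp (-θ * x)| ≤ max 1 θ * min x (x ^ 2) := by
  have h := one_sub_exp_neg_le_min (θ * x)
  have h0 : exp (-(θ * x)) ≤ 1 := exp_le_one_iff.2 (neg_nonpos.2 (mul_nonneg hθ hx))
  rw [neg_mul, ← mul_one_sub, abs_of_nonneg (mul_nonneg hx (sub_nonneg.2 h0))]
  rcases le_total x 1 with h1 | h1
  · rw [min_eq_right (by nlinarith)]
    calc x * (1 - exp (-(θ * x))) ≤ x * (θ * x) := by gcongr; exact h.trans (min_le_right _ _)
      _ = θ * x ^ 2 := by ring
      _ ≤ _ := by gcongr; exact le_max_right _ _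
  · rw [min_eq_left (by nlinarith)]
    calc x * (1 - exp (-(θ * x))) ≤ x * 1 := by gcongr; exact h.trans (min_le_left _ _)
      _ = 1 * x := by ring
      _ ≤ _ := by gcongr; exact le_max_left _ _

lemma hasDerivAt_exp_neg_mul_sub_one_add_mul (θ x : ℝ) :
    HasDerivAt (fun θ => exp (-θ * x) - 1 + θ * x) (x - x * exp (-θ * x)) θ :=
  ((((hasDerivAt_neg θ).mul_const x).exp.sub_const 1).add
    (hasDerivAt_mul_const x)).congr_deriv (by ring)

lemma convexOn_exp_neg_mul_sub_one_add_mul (x : ℝ) :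
    ConvexOn ℝ univ fun θ => exp (-θ * x) - 1 + θ * x := by
  refine ⟨convex_univ, fun a _ b _ p q hp hq hpq => ?_⟩
  have h := convexOn_exp.2 (mem_univ (-a * x)) (mem_univ (-b * x)) hp hq hpq
  simp only [smul_eq_mul] at h ⊢
  have he : -(p * a + q * b) * x = p * (-a * x) + q * (-b * x) := by ring
  rw [he]
  nlinarith [h]

section IntegralParam

variable {α E : Type*} [MeasurableSpace α] {ν : Measure α} {s : Set E} {F : E → α → ℝ}

lemma convexOn_integral [AddCommGroup E] [Module ℝ E] (hs : Convex ℝ s)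
    (hint : ∀ θ ∈ s, Integrable (F θ) ν)
    (hF : ∀ᵐ x ∂ν, ConvexOn ℝ s (F · x)) : ConvexOn ℝ s fun θ => ∫ x, F θ x ∂ν := by
  refine ⟨hs, fun a ha b hb p q hp hq hpq => ?_⟩
  rw [smul_eq_mul, smul_eq_mul, ← integral_const_mul, ← integral_const_mul,
    ← integral_add ((hint a ha).const_mul p) ((hint b hb).const_mul q)]
  refine integral_mono_ae (hint _ (hs ha hb hp hq hpq))
    (((hint a ha).const_mul p).add ((hint b hb).const_mul q)) ?_
  filter_upwards [hF] with x hx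
  exact hx.2 ha hb hp hq hpq

lemma monotoneOn_integral [Preorder E] (hint : ∀ θ ∈ s, Integrable (F θ) ν)
    (hF : ∀ᵐ x ∂ν, MonotoneOn (F · x) s) : MonotoneOn (fun θ => ∫ x, F θ x ∂ν) s := by
  intro a ha b hb hab
  refine integral_mono_ae (hint a ha) (hint b hb) ?_
  filter_upwards [hF] with x hx
  exact hx ha hb hab

end IntegralParam

lemma ConvexOn.abs_sub_le_of_hasDerivAt {f : ℝ → ℝ} {s : Set ℝ} {p C a b : ℝ}
    (hconv : ConvexOn ℝ s f) (hmono : MonotoneOn f s) (hp : p ∈ s) (hf : HasDerivAt f C p)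
    (ha : a ∈ s) (hb : b ∈ s) (hap : a ≤ p) (hbp : b ≤ p) : |f a - f b| ≤ C * |a - b| := by
  wlog hab : a < b generalizing a b
  · rcases (not_lt.1 hab).eq_or_lt with rfl | hba
    · simp
    · simpa only [abs_sub_comm] using this hb ha hbp hap hba
  have hslope : (f b - f a) / (b - a) ≤ C := by
    rcases hbp.eq_or_lt with rfl | hbp
    · simpa only [slope_def_field] using hconv.slope_le_of_hasDerivAt ha hb hab hf
    · refine (hconv.secant_mono ha hb hp hab.ne' (hab.trans hbp).ne' hbp.le).trans ?_
      simpa only [slope_def_field] using hconv.slope_le_of_hasDerivAt ha hp (hab.trans hbp) hf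
  rw [div_le_iff₀ (sub_pos.2 hab)] at hslope
  rwa [abs_sub_comm, abs_of_nonneg (sub_nonneg.2 (hmono ha hb hab.le)), abs_sub_comm,
    abs_of_pos (sub_pos.2 hab)]

noncomputable def branchingMechanism (μ : Measure ℝ) (γ θ : ℝ) : ℝ :=
  γ ^ 2 * θ ^ 2 + ∫ x in Ioi (0 : ℝ), (exp (-θ * x) - 1 + θ * x) ∂μ

section BranchingMechanism

variable {μ : Measure ℝ} (γ : ℝ) (hμ : IntegrableOn (fun x => min x (x ^ 2)) (Ioi 0) μ)
include hμ

lemma integrableOn_exp_neg_mul_sub_one_add_mul {θ : ℝ} (hθ : 0 ≤ θ) :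
    IntegrableOn (fun x => exp (-θ * x) - 1 + θ * x) (Ioi 0) μ := by
  refine (hμ.const_mul (max θ (θ ^ 2))).mono' (by fun_prop) ?_
  filter_upwards [ae_restrict_mem measurableSet_Ioi] with x (hx : 0 < x)
  rw [norm_of_nonneg (by simpa [neg_mul] using exp_neg_sub_one_add_nonneg (θ * x))]
  exact exp_neg_mul_sub_one_add_mul_le hθ hx.le

lemma convexOn_branchingMechanism : ConvexOn ℝ (Ici 0) (branchingMechanism μ γ) := by
  refine ((convexOn_pow 2).smul (sq_nonneg γ)).add
    (convexOn_integral (convex_Ici 0)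
      (fun θ hθ => integrableOn_exp_neg_mul_sub_one_add_mul hμ hθ) ?_)
  exact ae_of_all _ fun x =>
    (convexOn_exp_neg_mul_sub_one_add_mul x).subset (subset_univ _) (convex_Ici 0)

lemma monotoneOn_branchingMechanism : MonotoneOn (branchingMechanism μ γ) (Ici 0) := by
  refine MonotoneOn.add (fun a (ha : 0 ≤ a) b _ hab => by gcongr)
    (monotoneOn_integral (fun θ hθ => integrableOn_exp_neg_mul_sub_one_add_mul hμ hθ) ?_)
  filter_upwards [ae_restrict_mem measurableSet_Ioi] with x (hx : 0 < x)
  intro a (ha : 0 ≤ a) b _ hab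
  simpa only [neg_mul] using
    exp_neg_sub_one_add_le_of_le (mul_nonneg ha hx.le) (mul_le_mul_of_nonneg_right hab hx.le)

omit hμ in
lemma branchingMechanism_zero : branchingMechanism μ γ 0 = 0 := by
  simp [branchingMechanism]

lemma branchingMechanism_nonneg {θ : ℝ} (hθ : 0 ≤ θ) : 0 ≤ branchingMechanism μ γ θ :=
  branchingMechanism_zero γ ▸
    monotoneOn_branchingMechanism γ hμ self_mem_Ici hθ hθ

lemma differentiableAt_branchingMechanism {p : ℝ} (hp : 0 < p) :
    DifferentiableAt ℝ (branchingMechanism μ γ) p := by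
  have hbound : ∀ᵐ x ∂μ.restrict (Ioi 0), ∀ θ ∈ Metric.ball p p,
      ‖x - x * exp (-θ * x)‖ ≤ max 1 (2 * p) * min x (x ^ 2) := by
    filter_upwards [ae_restrict_mem measurableSet_Ioi] with x (hx : 0 < x) θ hθ
    rw [Metric.mem_ball, Real.dist_eq, abs_lt] at hθ
    refine (abs_sub_mul_exp_neg_mul_le (by linarith) hx.le).trans ?_
    gcongr
    linarith
  obtain ⟨-, hI⟩ := hasDerivAt_integral_of_dominated_loc_of_deriv_le
    (μ := μ.restrict (Ioi 0)) (F := fun θ x => exp (-θ * x) - 1 + θ * x)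
    (Metric.ball_mem_nhds p hp) (.of_forall fun θ => by fun_prop)
    (integrableOn_exp_neg_mul_sub_one_add_mul hμ hp.le) (by fun_prop) hbound (hμ.const_mul _)
    (.of_forall fun x θ _ => hasDerivAt_exp_neg_mul_sub_one_add_mul θ x)
  exact (((hasDerivAt_pow 2 p).const_mul (γ ^ 2)).add hI).differentiableAt

lemma deriv_branchingMechanism_nonneg {p : ℝ} (hp : 0 < p) :
    0 ≤ deriv (branchingMechanism μ γ) p :=
  ((monotoneOn_branchingMechanism γ hμ).slope_nonneg self_mem_Ici hp.le).trans
    ((convexOn_branchingMechanism γ hμ).slope_le_deriv self_mem_Ici hp.le hp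
      (differentiableAt_branchingMechanism γ hμ hp))

lemma abs_branchingMechanism_sub_le {p : ℝ} (hp : 0 < p) :
    ∀ a ∈ Icc 0 p, ∀ b ∈ Icc 0 p, |branchingMechanism μ γ a - branchingMechanism μ γ b| ≤
      deriv (branchingMechanism μ γ) p * |a - b| := fun _ ha _ hb =>
  (convexOn_branchingMechanism γ hμ).abs_sub_le_of_hasDerivAt
    (monotoneOn_branchingMechanism γ hμ) hp.le
    (differentiableAt_branchingMechanism γ hμ hp).hasDerivAt ha.1 hb.1 ha.2 hb.2

end BranchingMechanism

lemma norm_le_gronwallBound_of_norm_deriv_le_backward {E : Type*} [NormedAddCommGroup E]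
    [NormedSpace ℝ E] {f f' : ℝ → E} {a b δ K ε : ℝ}
    (hf : ∀ s ∈ Icc a b, HasDerivWithinAt f (f' s) (Icc a b) s) (hb : ‖f b‖ ≤ δ)
    (bound : ∀ s ∈ Icc a b, ‖f' s‖ ≤ K * ‖f s‖ + ε) :
    ∀ s ∈ Icc a b, ‖f s‖ ≤ gronwallBound δ K ε (b - s) := by
  have hrefl : MapsTo (fun r => a + b - r) (Icc a b) (Icc a b) := fun r hr =>
    ⟨by linarith [hr.2], by linarith [hr.1]⟩
  have hg : ∀ r ∈ Icc a b,
      HasDerivWithinAt (fun r => f (a + b - r)) (-f' (a + b - r)) (Icc a b) r := fun r hr => by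
    simpa [Function.comp_def] using
      (hf _ (hrefl hr)).scomp r ((hasDerivWithinAt_id r _).const_sub (a + b)) hrefl
  intro s hs
  have := norm_le_gronwallBound_of_norm_deriv_right_le (f := fun r => f (a + b - r))
    (fun r hr => (hg r hr).continuousWithinAt)
    (fun r hr => (hg r (Ico_subset_Icc_self hr)).mono_of_mem_nhdsWithin
      (Filter.mem_of_superset (Icc_mem_nhdsGE_of_mem ⟨le_rfl, hr.2⟩)
        (Icc_subset_Icc hr.1 le_rfl)))
    (by simpa using hb) (fun r hr => by simpa using bound _ (hrefl (Ico_subset_Icc_self hr)))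
    (a + b - s) (hrefl hs)
  rwa [show a + b - (a + b - s) = s by ring, show a + b - s - a = b - s by ring] at this

lemma gronwallBound_zero_le {K ε x : ℝ} (hK : 0 ≤ K) (hε : 0 ≤ ε) :
    gronwallBound 0 K ε x ≤ x * ε * exp (K * x) := by
  rcases hK.eq_or_lt with rfl | hK
  · simp [gronwallBound_K0, mul_comm]
  have hexp : exp (K * x) - 1 ≤ K * x * exp (K * x) := by
    have h := mul_le_mul_of_nonneg_left (add_one_le_exp (-(K * x))) (exp_pos (K * x)).le
    rw [← exp_add, add_neg_cancel, exp_zero] at h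
    linarith
  simp only [gronwallBound_of_K_ne_0 hK.ne', zero_mul, zero_add]
  rw [div_mul_eq_mul_div, div_le_iff₀ hK]
  nlinarith [mul_le_mul_of_nonneg_left hexp hε]

lemma abs_exp_mul_comp_sub_exp_mul_comp_le {f : ℝ → ℝ} {k k' x y lam S C δ : ℝ}
    (hmono : MonotoneOn f (Ici 0)) (hf0 : 0 ≤ f 0)
    (hlip : ∀ a ∈ Icc 0 (lam * S), ∀ b ∈ Icc 0 (lam * S), |f a - f b| ≤ C * |a - b|)
    (hC : 0 ≤ C) (hS : 1 ≤ S) (hx : x ∈ Icc 0 lam) (hy : y ∈ Icc 0 lam)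
    (hk : exp (-k) ≤ S) (hk' : exp k' ≤ S) (hk'' : exp (-k') ≤ S)
    (hδ : |exp k - exp k'| ≤ δ) (hδ' : |exp (-k) - exp (-k')| ≤ δ) :
    |exp k * f (x * exp (-k)) - exp k' * f (y * exp (-k'))| ≤
      C * |x - y| + (S * C * lam + S * f (S * lam)) * δ := by
  have hlam : 0 ≤ lam := hx.1.trans hx.2
  have hδ0 : 0 ≤ δ := (abs_nonneg _).trans hδ
  have hmem : ∀ z ∈ Icc 0 lam, ∀ e, exp e ≤ S → z * exp e ∈ Icc 0 (lam * S) :=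
    fun z hz e he => ⟨mul_nonneg hz.1 (exp_pos e).le, mul_le_mul hz.2 he (exp_pos e).le hlam⟩
  set a := x * exp (-k)
  set b := y * exp (-k)
  set c := y * exp (-k')
  have hfb : 0 ≤ f b := hf0.trans (hmono self_mem_Ici (hmem y hy _ hk).1 (hmem y hy _ hk).1)
  have hfbp : f b ≤ S * f (S * lam) := by
    have h := hmono (hmem y hy _ hk).1 (mul_nonneg hlam (by linarith)) (hmem y hy _ hk).2
    rw [mul_comm lam S] at h
    nlinarith
  have hexp : exp k * exp (-k) = 1 := by rw [← exp_add, add_neg_cancel, exp_zero]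
  have h₁ : |exp k * (f a - f b)| ≤ C * |x - y| := by
    rw [abs_mul, abs_of_pos (exp_pos k)]
    calc exp k * |f a - f b| ≤ exp k * (C * |a - b|) :=
          mul_le_mul_of_nonneg_left (hlip a (hmem x hx _ hk) b (hmem y hy _ hk)) (exp_pos k).le
      _ = C * |x - y| * (exp k * exp (-k)) := by
          rw [← sub_mul, abs_mul, abs_of_pos (exp_pos (-k))]; ring
      _ = C * |x - y| := by rw [hexp, mul_one]
  have h₂ : |(exp k - exp k') * f b| ≤ S * f (S * lam) * δ := by
    rw [abs_mul, abs_of_nonneg hfb, mul_comm]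
    exact mul_le_mul hfbp hδ (abs_nonneg _) (by linarith)
  have h₃ : |exp k' * (f b - f c)| ≤ S * C * lam * δ := by
    rw [abs_mul, abs_of_pos (exp_pos k')]
    calc exp k' * |f b - f c| ≤ S * (C * |b - c|) :=
          mul_le_mul hk' (hlip b (hmem y hy _ hk) c (hmem y hy _ hk'')) (abs_nonneg _)
            (by linarith)
      _ = S * C * (y * |exp (-k) - exp (-k')|) := by
          rw [← mul_sub, abs_mul, abs_of_nonneg hy.1]; ring
      _ ≤ S * C * (lam * δ) := by gcongr; exact hy.2
      _ = S * C * lam * δ := by ring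
  calc |exp k * f a - exp k' * f c|
      = |exp k * (f a - f b) + (exp k - exp k') * f b + exp k' * (f b - f c)| := by ring_nf
    _ ≤ |exp k * (f a - f b)| + |(exp k - exp k') * f b| + |exp k' * (f b - f c)| :=
        abs_add_three _ _ _
    _ ≤ C * |x - y| + (S * C * lam + S * f (S * lam)) * δ := by linarith

lemma one_le_of_exp_le_of_exp_neg_le {k S : ℝ} (h : exp k ≤ S) (h' : exp (-k) ≤ S) : 1 ≤ S := by
  rcases le_total 0 k with hk | hk
  exacts [(one_le_exp hk).trans h, (one_le_exp (neg_nonneg.2 hk)).trans h']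

theorem stmt_9_general (μ : Measure ℝ) (γ : ℝ)
    (hμ : IntegrableOn (fun x => min x (x ^ 2)) (Set.Ioi 0) μ)
    (ψ₀ : ℝ → ℝ)
    (hψ : ∀ θ, ψ₀ θ = γ ^ 2 * θ ^ 2 +
      ∫ x in Set.Ioi (0:ℝ), (Real.exp (-θ * x) - 1 + θ * x) ∂μ)
    (t lam : ℝ) (hlam : 0 < lam)
    (K K' : ℝ → ℝ)
    (v w : ℝ → ℝ)
    (hvmem : ∀ s ∈ Set.Icc (0:ℝ) t, v s ∈ Set.Icc 0 lam)
    (hwmem : ∀ s ∈ Set.Icc (0:ℝ) t, w s ∈ Set.Icc 0 lam)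
    (hvt : v t = lam) (hwt : w t = lam)
    (hv : ∀ s ∈ Set.Icc (0:ℝ) t,
      HasDerivWithinAt v (Real.exp (K s) * ψ₀ (v s * Real.exp (-K s)))
        (Set.Icc 0 t) s)
    (hw : ∀ s ∈ Set.Icc (0:ℝ) t,
      HasDerivWithinAt w (Real.exp (K' s) * ψ₀ (w s * Real.exp (-K' s)))
        (Set.Icc 0 t) s)
    (S C δ : ℝ)
    (hS : IsGreatest ((fun s => max (max (Real.exp (K s)) (Real.exp (-K s)))
      (max (Real.exp (K' s)) (Real.exp (-K' s)))) '' Set.Icc 0 t) S)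
    (hC : C = deriv ψ₀ (lam * S))
    (hδ : IsGreatest ((fun s => max |Real.exp (K s) - Real.exp (K' s)|
      |Real.exp (-K s) - Real.exp (-K' s)|) '' Set.Icc 0 t) δ) :
    ∀ s ∈ Set.Icc (0:ℝ) t,
      |v s - w s| ≤ t * (S * C * lam + S * ψ₀ (S * lam)) * δ * Real.exp (C * t) := by
  obtain rfl : ψ₀ = branchingMechanism μ γ := funext hψ
  intro s hs
  have hSle : ∀ r ∈ Icc 0 t,
      (exp (K r) ≤ S ∧ exp (-K r) ≤ S) ∧ exp (K' r) ≤ S ∧ exp (-K' r) ≤ S :=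
    fun r hr => by simpa only [max_le_iff] using hS.2 (mem_image_of_mem _ hr)
  have hδle : ∀ r ∈ Icc 0 t,
      |exp (K r) - exp (K' r)| ≤ δ ∧ |exp (-K r) - exp (-K' r)| ≤ δ :=
    fun r hr => by simpa only [max_le_iff] using hδ.2 (mem_image_of_mem _ hr)
  have hS1 : 1 ≤ S := one_le_of_exp_le_of_exp_neg_le (hSle s hs).1.1 (hSle s hs).1.2
  have hp : 0 < lam * S := by positivity
  have hC0 : 0 ≤ C := hC ▸ deriv_branchingMechanism_nonneg γ hμ hp
  have hΔ : 0 ≤ (S * C * lam + S * branchingMechanism μ γ (S * lam)) * δ := by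
    have := branchingMechanism_nonneg γ hμ (by positivity : 0 ≤ S * lam)
    have := (abs_nonneg _).trans (hδle s hs).1
    positivity
  have hstep : ∀ r ∈ Icc 0 t, ‖exp (K r) * branchingMechanism μ γ (v r * exp (-K r)) -
      exp (K' r) * branchingMechanism μ γ (w r * exp (-K' r))‖ ≤
      C * ‖v r - w r‖ + (S * C * lam + S * branchingMechanism μ γ (S * lam)) * δ :=
    fun r hr => abs_exp_mul_comp_sub_exp_mul_comp_le (monotoneOn_branchingMechanism γ hμ)
      (branchingMechanism_zero γ).ge (hC ▸ abs_branchingMechanism_sub_le γ hμ hp) hC0 hS1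
      (hvmem r hr) (hwmem r hr) (hSle r hr).1.2 (hSle r hr).2.1 (hSle r hr).2.2
      (hδle r hr).1 (hδle r hr).2
  calc |v s - w s|
      ≤ gronwallBound 0 C _ (t - s) := norm_le_gronwallBound_of_norm_deriv_le_backward
        (fun r hr => (hv r hr).sub (hw r hr)) (by simp [hvt, hwt]) hstep s hs
    _ ≤ gronwallBound 0 C _ t := gronwallBound_mono le_rfl hΔ hC0 (by linarith [hs.1])
    _ ≤ _ := (gronwallBound_zero_le hC0 hΔ).trans_eq (by ring)

theorem stmt_9 (μ : Measure ℝ) (γ : ℝ) (hγ : 0 ≤ γ)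
    (hμ : IntegrableOn (fun x => min x (x ^ 2)) (Set.Ioi 0) μ)
    (ψ₀ : ℝ → ℝ)
    (hψ : ∀ θ, ψ₀ θ = γ ^ 2 * θ ^ 2 +
      ∫ x in Set.Ioi (0:ℝ), (Real.exp (-θ * x) - 1 + θ * x) ∂μ)
    (t lam : ℝ) (ht : 0 < t) (hlam : 0 < lam)
    (K K' : ℝ → ℝ) (hK : ContinuousOn K (Set.Icc 0 t))
    (hK' : ContinuousOn K' (Set.Icc 0 t))
    (v w : ℝ → ℝ)
    (hvmem : ∀ s ∈ Set.Icc (0:ℝ) t, v s ∈ Set.Icc 0 lam)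
    (hwmem : ∀ s ∈ Set.Icc (0:ℝ) t, w s ∈ Set.Icc 0 lam)
    (hvt : v t = lam) (hwt : w t = lam)
    (hv : ∀ s ∈ Set.Icc (0:ℝ) t,
      HasDerivWithinAt v (Real.exp (K s) * ψ₀ (v s * Real.exp (-K s)))
        (Set.Icc 0 t) s)
    (hw : ∀ s ∈ Set.Icc (0:ℝ) t,
      HasDerivWithinAt w (Real.exp (K' s) * ψ₀ (w s * Real.exp (-K' s)))
        (Set.Icc 0 t) s)
    (S C δ : ℝ)
    (hS : IsGreatest ((fun s => max (max (Real.exp (K s)) (Real.exp (-K s)))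
      (max (Real.exp (K' s)) (Real.exp (-K' s)))) '' Set.Icc 0 t) S)
    (hC : C = deriv ψ₀ (lam * S))
    (hδ : IsGreatest ((fun s => max |Real.exp (K s) - Real.exp (K' s)|
      |Real.exp (-K s) - Real.exp (-K' s)|) '' Set.Icc 0 t) δ) :
    ∀ s ∈ Set.Icc (0:ℝ) t,
      |v s - w s| ≤ t * (S * C * lam + S * ψ₀ (S * lam)) * δ * Real.exp (C * t) :=
  stmt_9_general μ γ hμ ψ₀ hψ t lam hlam K K' v w hvmem hwmem hvt hwt hv hw S C δ hS hC hδ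
end

section
/- Let t > 0, λ > 0, and let K : [0,t] → ℝ be continuous. Define v : [0,t] → ℝ by v(s) = exp( e^s ( ∫_s^t e^{−u} K(u) du + e^{−t} log λ ) ). Then v(t) = λ and v is differentiable on [0,t] with v'(s) = v(s) · log( e^{−K(s)} v(s) ) for every s ∈ [0,t]. -/
open Real MeasureTheory

theorem stmt_10 (t lam : ℝ) (ht : 0 < t) (hlam : 0 < lam)
    (K : ℝ → ℝ) (hK : ContinuousOn K (Set.Icc 0 t))
    (v : ℝ → ℝ)
    (hv : ∀ s, v s = Real.exp (Real.exp s *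
      ((∫ u in s..t, Real.exp (-u) * K u) + Real.exp (-t) * Real.log lam))) :
    v t = lam ∧
      ∀ s ∈ Set.Icc (0:ℝ) t,
        HasDerivWithinAt v (v s * Real.log (Real.exp (-K s) * v s))
          (Set.Icc 0 t) s := by
  constructor
  · rw [hv t, intervalIntegral.integral_same, zero_add, ← mul_assoc, ← Real.exp_add,
      add_neg_cancel, Real.exp_zero, one_mul, Real.exp_log hlam]
  · intro s hs
    obtain ⟨f, hfc, hfK⟩ : ∃ f : ℝ → ℝ, Continuous f ∧ ∀ x ∈ Set.Icc (0:ℝ) t, f x = K x := by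
      refine ⟨fun x => K (max 0 (min t x)), ?_, ?_⟩
      · have : ContinuousOn (fun x => K (max 0 (min t x))) Set.univ := by
          apply hK.comp (by fun_prop)
          intro x _
          exact ⟨le_max_left _ _, max_le ht.le (min_le_left _ _)⟩
        exact continuousOn_univ.mp this
      · intro x hx
        simp [min_eq_right hx.2, max_eq_right hx.1]
    have hgc : Continuous (fun x => Real.exp (-x) * f x) := by fun_prop
    set c : ℝ := Real.exp (-t) * Real.log lam with hc
    have hwv : ∀ x ∈ Set.Icc (0:ℝ) t,
        Real.exp (Real.exp x * ((∫ u in x..t, Real.exp (-u) * f u) + c)) = v x := by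
      intro x hx
      rw [hv x]
      have : (∫ u in x..t, Real.exp (-u) * f u) = ∫ u in x..t, Real.exp (-u) * K u := by
        apply intervalIntegral.integral_congr
        intro u hu
        rw [Set.uIcc_of_le hx.2] at hu
        show Real.exp (-u) * f u = Real.exp (-u) * K u
        rw [hfK u ⟨le_trans hx.1 hu.1, hu.2⟩]
      rw [this]
    have hF : HasDerivAt (fun x => (∫ u in x..t, Real.exp (-u) * f u) + c)
        (-(Real.exp (-s) * f s)) s := by
      apply HasDerivAt.add_const
      exact intervalIntegral.integral_hasDerivAt_left
        (hgc.intervalIntegrable s t)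
        hgc.aestronglyMeasurable.stronglyMeasurableAtFilter
        hgc.continuousAt
    have hG : HasDerivAt (fun x => Real.exp x * ((∫ u in x..t, Real.exp (-u) * f u) + c))
        (Real.exp s * ((∫ u in s..t, Real.exp (-u) * f u) + c) +
          Real.exp s * (-(Real.exp (-s) * f s))) s :=
      (Real.hasDerivAt_exp s).mul hF
    have hW : HasDerivAt (fun x => Real.exp (Real.exp x * ((∫ u in x..t, Real.exp (-u) * f u) + c)))
        (Real.exp (Real.exp s * ((∫ u in s..t, Real.exp (-u) * f u) + c)) *
          (Real.exp s * ((∫ u in s..t, Real.exp (-u) * f u) + c) +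
            Real.exp s * (-(Real.exp (-s) * f s)))) s :=
      hG.exp
    have heq : Real.exp (Real.exp s * ((∫ u in s..t, Real.exp (-u) * f u) + c)) *
          (Real.exp s * ((∫ u in s..t, Real.exp (-u) * f u) + c) +
            Real.exp s * (-(Real.exp (-s) * f s)))
        = v s * Real.log (Real.exp (-K s) * v s) := by
      have hvs : v s = Real.exp (Real.exp s * ((∫ u in s..t, Real.exp (-u) * f u) + c)) :=
        (hwv s hs).symm
      rw [hvs, Real.log_mul (Real.exp_ne_zero _) (Real.exp_ne_zero _),
        Real.log_exp, Real.log_exp]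
      rw [hfK s hs]
      have h1 : Real.exp s * Real.exp (-s) = 1 := by
        rw [← Real.exp_add, add_neg_cancel, Real.exp_zero]
      linear_combination (-(Real.exp (Real.exp s * ((∫ u in s..t, Real.exp (-u) * f u) + c)) * K s)) * h1
    exact ((hW.hasDerivWithinAt.congr (fun x hx => (hwv x hx).symm) (hwv s hs).symm).congr_deriv heq)
end

section
/- Let K : [0,∞) → ℝ be continuous with K(s)/s → m as s → ∞ for some m ∈ (0,∞), and let z, k > 0. Define Z : [0,∞) → ℝ by Z(s) = z e^{K(s)} / (1 + kz ∫_0^s e^{K(r)} dr). Then (1/t) ∫_0^t Z(s) ds → m/k as t → ∞. -/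
open Real MeasureTheory Filter Set

/-!
With `F t = ∫₀ᵗ exp ∘ K`, the integrand `Z` is `(1/k) d/ds log (1 + k z F s)`, so
`∫₀ᵗ Z = log (1 + k z F t) / k` and it suffices that `log (1 + c F t) / t → m`.
For `0 ≤ α < m` one eventually has `K s ≥ α s`, hence
`F t ≥ ∫_{t-1}^t exp ∘ K ≥ exp (α (t - 1))`. For `α > m`, continuity on a compact initial
segment gives `K s ≤ M + α s` on `[0, ∞)`, hence `F t ≤ exp M · exp (α t) / α`. Either way
`log (1 + c F t)` is squeezed by affine functions of slope `α`.
-/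

theorem eventually_lt_div_of_affine_le {f : ℝ → ℝ} {a α β : ℝ} (h : a < α)
    (hf : ∀ᶠ t in atTop, α * t + β ≤ f t) : ∀ᶠ t in atTop, a < f t / t := by
  have hβ : Tendsto (fun t : ℝ => β / t) atTop (nhds 0) :=
    tendsto_const_nhds.div_atTop tendsto_id
  have hlim : Tendsto (fun t => α + β / t) atTop (nhds α) := by
    simpa using (tendsto_const_nhds (x := α)).add hβ
  filter_upwards [hlim.eventually (lt_mem_nhds h), hf, eventually_gt_atTop 0]
    with t hlt hle ht
  rw [lt_div_iff₀ ht]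
  calc a * t < (α + β / t) * t := mul_lt_mul_of_pos_right hlt ht
    _ = α * t + β := by field_simp
    _ ≤ f t := hle

theorem eventually_div_lt_of_le_affine {f : ℝ → ℝ} {b α β : ℝ} (h : α < b)
    (hf : ∀ᶠ t in atTop, f t ≤ α * t + β) : ∀ᶠ t in atTop, f t / t < b := by
  have := eventually_lt_div_of_affine_le (f := fun t => -f t) (β := -β) (neg_lt_neg h)
    (hf.mono fun t ht => by linarith)
  filter_upwards [this] with t ht
  rw [neg_div] at ht
  linarith

theorem integral_mul_div_one_add_mul_primitive {E : ℝ → ℝ} {a b c : ℝ} (hab : a ≤ b)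
    (hE : ContinuousOn E (Icc a b)) (hE₀ : ∀ x ∈ Icc a b, 0 ≤ E x) (hc : 0 ≤ c) :
    ∫ s in a..b, c * E s / (1 + c * ∫ r in a..s, E r) =
      log (1 + c * ∫ r in a..b, E r) := by
  set F : ℝ → ℝ := fun s => ∫ r in a..s, E r
  have hF₀ : ∀ x ∈ Icc a b, 0 < 1 + c * F x := fun x hx =>
    add_pos_of_pos_of_nonneg one_pos <| mul_nonneg hc <|
      intervalIntegral.integral_nonneg hx.1 fun r hr => hE₀ r ⟨hr.1, hr.2.trans hx.2⟩
  have hFcont : ContinuousOn F (Icc a b) := by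
    simpa [uIcc_of_le hab] using intervalIntegral.continuousOn_primitive_interval'
      (ContinuousOn.intervalIntegrable_of_Icc hab hE) left_mem_uIcc
  have hFderiv : ∀ x ∈ Ioo a b, HasDerivAt F (E x) x := fun x hx =>
    intervalIntegral.integral_hasDerivAt_right
      (ContinuousOn.intervalIntegrable_of_Icc hx.1.le (hE.mono (Icc_subset_Icc_right hx.2.le)))
      ((hE.mono Ioo_subset_Icc_self).stronglyMeasurableAtFilter isOpen_Ioo x hx)
      (hE.continuousAt (Icc_mem_nhds hx.1 hx.2))
  have hden : ContinuousOn (fun s => 1 + c * F s) (Icc a b) :=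
    continuousOn_const.add (continuousOn_const.mul hFcont)
  have hint : ContinuousOn (fun s => c * E s / (1 + c * F s)) (Icc a b) :=
    (continuousOn_const.mul hE).div hden fun x hx => (hF₀ x hx).ne'
  rw [intervalIntegral.integral_eq_sub_of_hasDerivAt_of_le hab
    (hden.log fun x hx => (hF₀ x hx).ne')
    (fun x hx => (((hFderiv x hx).const_mul c).const_add 1).log
      (hF₀ x (Ioo_subset_Icc_self hx)).ne')
    (ContinuousOn.intervalIntegrable_of_Icc hab hint)]
  simp [F]

section Growth

variable {K : ℝ → ℝ}

theorem intervalIntegrable_exp_comp (hK : ContinuousOn K (Ici 0)) {a b : ℝ} (ha : 0 ≤ a)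
    (hb : 0 ≤ b) : IntervalIntegrable (fun r => exp (K r)) volume a b :=
  ((continuous_exp.comp_continuousOn hK).mono fun _ hx =>
    le_trans (le_inf ha hb) hx.1).intervalIntegrable

theorem exists_le_add_mul_of_eventually_le (hK : ContinuousOn K (Ici 0)) {b : ℝ}
    (hKb : ∀ᶠ s in atTop, K s ≤ b * s) : ∃ M, ∀ s, 0 ≤ s → K s ≤ M + b * s := by
  obtain ⟨S, hS⟩ := eventually_atTop.1 hKb
  obtain ⟨M, hM⟩ := (isCompact_Icc (a := 0) (b := S)).bddAbove_image
    (f := fun s => K s - b * s) ((hK.mono Icc_subset_Ici_self).sub (by fun_prop))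
  refine ⟨max M 0, fun s hs => ?_⟩
  rcases le_total s S with hsS | hSs
  · have := hM ⟨s, ⟨hs, hsS⟩, rfl⟩
    linarith [le_max_left M 0]
  · linarith [hS s hSs, le_max_right M 0]

theorem exists_affine_le_log_one_add_mul_integral_exp (hK : ContinuousOn K (Ici 0))
    {c α : ℝ} (hc : 0 < c) (hα : 0 ≤ α) (hKα : ∀ᶠ s in atTop, α * s ≤ K s) :
    ∃ β, ∀ᶠ t in atTop, α * t + β ≤ log (1 + c * ∫ r in (0 : ℝ)..t, exp (K r)) := by
  obtain ⟨S, hS⟩ := eventually_atTop.1 hKα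
  refine ⟨log c - α, ?_⟩
  filter_upwards [eventually_ge_atTop (max S 0 + 1)] with t ht
  have ht₁ : 0 ≤ t - 1 := by linarith [le_max_right S 0]
  have ht₀ : 0 ≤ t := by linarith
  have hlast : exp (α * (t - 1)) ≤ ∫ r in (t - 1)..t, exp (K r) := by
    simpa [sub_sub_cancel] using intervalIntegral.integral_mono_on (by linarith)
      intervalIntegrable_const (intervalIntegrable_exp_comp hK ht₁ ht₀) fun s hs =>
        exp_le_exp.2 <| (mul_le_mul_of_nonneg_left hs.1 hα).trans <|
          hS s (by linarith [le_max_left S 0, hs.1])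
  have hsplit := intervalIntegral.integral_add_adjacent_intervals
    (intervalIntegrable_exp_comp hK le_rfl ht₁) (intervalIntegrable_exp_comp hK ht₁ ht₀)
  have hhead : 0 ≤ ∫ r in (0 : ℝ)..(t - 1), exp (K r) :=
    intervalIntegral.integral_nonneg ht₁ fun _ _ => (exp_pos _).le
  calc α * t + (log c - α) = log (c * exp (α * (t - 1))) := by
        rw [log_mul hc.ne' (exp_pos _).ne', log_exp]; ring
    _ ≤ log (1 + c * ∫ r in (0 : ℝ)..t, exp (K r)) := by
        gcongr
        rw [← hsplit]
        nlinarith [mul_le_mul_of_nonneg_left hlast hc.le, mul_nonneg hc.le hhead]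

theorem exists_log_one_add_mul_integral_exp_le_affine (hK : ContinuousOn K (Ici 0))
    {c α : ℝ} (hc : 0 ≤ c) (hα : 0 < α) (hKα : ∀ᶠ s in atTop, K s ≤ α * s) :
    ∃ β, ∀ᶠ t in atTop, log (1 + c * ∫ r in (0 : ℝ)..t, exp (K r)) ≤ α * t + β := by
  obtain ⟨M, hM⟩ := exists_le_add_mul_of_eventually_le hK hKα
  refine ⟨log (1 + c * exp M / α), ?_⟩
  filter_upwards [eventually_ge_atTop 0] with t ht
  have hexp : ∫ s in (0 : ℝ)..t, exp (α * s) = (exp (α * t) - 1) / α := by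
    rw [intervalIntegral.integral_comp_mul_left (fun s => exp s) hα.ne', integral_exp]
    simp [div_eq_inv_mul]
  have hint : ∫ r in (0 : ℝ)..t, exp (K r) ≤ exp M * (exp (α * t) / α) := by
    calc ∫ r in (0 : ℝ)..t, exp (K r) ≤ ∫ s in (0 : ℝ)..t, exp M * exp (α * s) :=
          intervalIntegral.integral_mono_on ht (intervalIntegrable_exp_comp hK le_rfl ht)
            ((by fun_prop : Continuous fun s => exp M * exp (α * s)).intervalIntegrable _ _)
            fun s hs => by rw [← exp_add]; exact exp_le_exp.2 (hM s hs.1)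
      _ ≤ exp M * (exp (α * t) / α) := by
          rw [intervalIntegral.integral_const_mul, hexp]
          gcongr
          linarith
  have hnonneg : 0 ≤ ∫ r in (0 : ℝ)..t, exp (K r) :=
    intervalIntegral.integral_nonneg ht fun _ _ => (exp_pos _).le
  have hone : 1 ≤ exp (α * t) := one_le_exp (by positivity)
  calc log (1 + c * ∫ r in (0 : ℝ)..t, exp (K r))
      ≤ log ((1 + c * exp M / α) * exp (α * t)) := by
        gcongr
        calc 1 + c * ∫ r in (0 : ℝ)..t, exp (K r)
            ≤ exp (α * t) + c * (exp M * (exp (α * t) / α)) := by gcongr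
          _ = (1 + c * exp M / α) * exp (α * t) := by ring
    _ = α * t + log (1 + c * exp M / α) := by
        rw [log_mul (by positivity) (exp_pos _).ne', log_exp, add_comm]

theorem tendsto_log_one_add_mul_integral_exp_div (hK : ContinuousOn K (Ici 0)) {m c : ℝ}
    (hm : 0 < m) (hKlim : Tendsto (fun s => K s / s) atTop (nhds m)) (hc : 0 < c) :
    Tendsto (fun t => log (1 + c * ∫ r in (0 : ℝ)..t, exp (K r)) / t) atTop (nhds m) := by
  refine tendsto_order.2 ⟨fun a ha => ?_, fun b hb => ?_⟩
  · obtain ⟨α, haα, hαm⟩ := exists_between (max_lt ha hm)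
    have hKα : ∀ᶠ s in atTop, α * s ≤ K s := by
      filter_upwards [hKlim.eventually (lt_mem_nhds hαm), eventually_gt_atTop 0] with s hs hs₀
      exact ((lt_div_iff₀ hs₀).1 hs).le
    obtain ⟨β, hβ⟩ := exists_affine_le_log_one_add_mul_integral_exp hK hc
      ((le_max_right a 0).trans haα.le) hKα
    exact eventually_lt_div_of_affine_le ((le_max_left a 0).trans_lt haα) hβ
  · obtain ⟨α, hmα, hαb⟩ := exists_between hb
    have hKα : ∀ᶠ s in atTop, K s ≤ α * s := by
      filter_upwards [hKlim.eventually (gt_mem_nhds hmα), eventually_gt_atTop 0] with s hs hs₀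
      exact ((div_lt_iff₀ hs₀).1 hs).le
    obtain ⟨β, hβ⟩ :=
      exists_log_one_add_mul_integral_exp_le_affine hK hc.le (hm.trans hmα) hKα
    exact eventually_div_lt_of_le_affine hαb hβ

end Growth

theorem stmt_18 (K : ℝ → ℝ) (hK : ContinuousOn K (Set.Ici 0))
    (m : ℝ) (hm : 0 < m)
    (hKlim : Tendsto (fun s => K s / s) atTop (nhds m))
    (z k : ℝ) (hz : 0 < z) (hk : 0 < k)
    (Z : ℝ → ℝ)
    (hZ : ∀ s, Z s = z * Real.exp (K s) /
      (1 + k * z * ∫ r in (0:ℝ)..s, Real.exp (K r))) :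
    Tendsto (fun t => (∫ s in (0:ℝ)..t, Z s) / t) atTop (nhds (m / k)) := by
  have hkz : 0 < k * z := mul_pos hk hz
  have hZ' : Z = fun s => k * z * exp (K s) / (1 + k * z * ∫ r in (0:ℝ)..s, exp (K r)) / k := by
    ext s
    rw [hZ]
    field_simp
  have hintZ : ∀ t, 0 ≤ t →
      ∫ s in (0:ℝ)..t, Z s = log (1 + k * z * ∫ r in (0:ℝ)..t, exp (K r)) / k := by
    intro t ht
    rw [hZ', intervalIntegral.integral_div, integral_mul_div_one_add_mul_primitive ht
      (E := fun r => exp (K r)) ((continuous_exp.comp_continuousOn hK).mono Icc_subset_Ici_self)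
      (fun _ _ => (exp_pos _).le) hkz.le]
  refine ((tendsto_log_one_add_mul_integral_exp_div hK hm hKlim hkz).div_const k).congr' ?_
  filter_upwards [eventually_ge_atTop 0] with t ht
  rw [hintZ t ht, div_right_comm]
end

section
/- There exists a constant c ∈ ℝ such that for every u > 0, the function x ↦ (e^{−ux} − 1 + ux·1_{(0,1)}(x)) x^{−2} is Lebesgue integrable on (0,∞) and ∫_0^∞ (e^{−ux} − 1 + ux·1_{(0,1)}(x)) x^{−2} dx = u log u + c u. -/
open Real MeasureTheory Set

noncomputable def gfun (y : ℝ) : ℝ :=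
  (Real.exp (-y) - 1 + (if y < 1 then y else 0)) / y ^ 2

lemma gfun_meas : Measurable gfun := by
  unfold gfun
  apply Measurable.div
  · exact ((Real.measurable_exp.comp measurable_neg).sub measurable_const).add
      (Measurable.ite measurableSet_Iio measurable_id measurable_const)
  · exact measurable_id.pow_const 2

lemma rpow_neg_two_eq {y : ℝ} (hy : 0 < y) : y ^ (-2:ℝ) = 1 / y ^ 2 := by
  rw [Real.rpow_neg hy.le, one_div]
  congr 1
  rw [← Real.rpow_natCast y 2]
  norm_num

lemma gfun_int : IntegrableOn gfun (Ioi 0) := by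
  have hsplit : Ioi (0:ℝ) = Ioo 0 1 ∪ Ici 1 := (Set.Ioo_union_Ici_eq_Ioi one_pos).symm
  rw [hsplit]
  apply IntegrableOn.union
  · -- bounded by 1 on Ioo 0 1
    apply Measure.integrableOn_of_bounded (M := 1)
    · simp [Real.volume_Ioo]
    · exact gfun_meas.aestronglyMeasurable
    · rw [ae_restrict_iff' measurableSet_Ioo]
      filter_upwards with y hy
      obtain ⟨hy0, hy1⟩ := hy
      have hx : |(-y)| ≤ 1 := by rw [abs_neg, abs_of_pos hy0]; exact hy1.le
      have hb := Real.abs_exp_sub_one_sub_id_le hx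
      have hy2 : (0:ℝ) < y ^ 2 := by positivity
      rw [gfun, if_pos hy1, Real.norm_eq_abs, abs_div, abs_of_pos hy2, div_le_one hy2]
      calc |Real.exp (-y) - 1 + y| = |Real.exp (-y) - 1 - (-y)| := by ring_nf
        _ ≤ (-y) ^ 2 := hb
        _ = y ^ 2 := by ring
  · -- bounded by y ^ (-2) on Ici 1
    have hint : IntegrableOn (fun y : ℝ => y ^ (-2:ℝ)) (Ici 1) := by
      rw [integrableOn_Ici_iff_integrableOn_Ioi]
      exact integrableOn_Ioi_rpow_of_lt (by norm_num) one_pos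
    apply Integrable.mono' hint (gfun_meas.aestronglyMeasurable).restrict
    rw [ae_restrict_iff' measurableSet_Ici]
    filter_upwards with y hy
    have hy0 : (0:ℝ) < y := lt_of_lt_of_le one_pos hy
    have hy2 : (0:ℝ) < y ^ 2 := by positivity
    have hnum : |Real.exp (-y) - 1| ≤ 1 := by
      rw [abs_le]
      have h1 := Real.exp_pos (-y)
      have h2 : Real.exp (-y) ≤ 1 := Real.exp_le_one_iff.mpr (by linarith)
      constructor <;> linarith
    rw [gfun, if_neg (not_lt.mpr hy), add_zero, Real.norm_eq_abs, abs_div,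
      abs_of_pos hy2, rpow_neg_two_eq hy0]
    gcongr

lemma intOn_div {u a b : ℝ} (ha : 0 < a) : IntegrableOn (fun x => u / x) (Icc a b) := by
  have : ContinuousOn (fun x : ℝ => u / x) (Icc a b) := by
    apply ContinuousOn.div continuousOn_const continuousOn_id
    intro x hx
    exact ne_of_gt (lt_of_lt_of_le ha hx.1)
  exact this.integrableOn_compact isCompact_Icc

lemma int_div {u a b : ℝ} (ha : 0 < a) (hab : a ≤ b) :
    ∫ x in Ico a b, u / x = u * (Real.log b - Real.log a) := by
  have hb : 0 < b := lt_of_lt_of_le ha hab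
  rw [integral_Ico_eq_integral_Ioo, ← integral_Ioc_eq_integral_Ioo,
    ← intervalIntegral.integral_of_le hab]
  have h : ∀ x : ℝ, u / x = u * (1 / x) := fun x => by ring
  simp_rw [h]
  rw [intervalIntegral.integral_const_mul, integral_one_div_of_pos ha hb,
    Real.log_div hb.ne' ha.ne']

theorem stmt_19 :
    ∃ c : ℝ, ∀ u > (0:ℝ),
      IntegrableOn (fun x =>
        (Real.exp (-u * x) - 1 + (if x < 1 then u * x else 0)) / x ^ 2)
        (Set.Ioi 0) ∧
      (∫ x in Set.Ioi (0:ℝ),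
        (Real.exp (-u * x) - 1 + (if x < 1 then u * x else 0)) / x ^ 2) =
        u * Real.log u + c * u := by
  refine ⟨∫ y in Ioi (0:ℝ), gfun y, fun u hu => ?_⟩
  set c := ∫ y in Ioi (0:ℝ), gfun y with hc
  have hu' : u ≠ 0 := hu.ne'
  have hu0 : (0:ℝ) < 1 / u := by positivity
  -- the scaled part
  have hGint : IntegrableOn (fun x => u ^ 2 * gfun (u * x)) (Ioi 0) := by
    have := (integrableOn_Ioi_comp_mul_left_iff gfun 0 hu).mpr (by simpa using gfun_int)
    exact this.const_mul (u ^ 2)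
  have hGval : ∫ x in Ioi (0:ℝ), u ^ 2 * gfun (u * x) = c * u := by
    rw [MeasureTheory.integral_const_mul, integral_comp_mul_left_Ioi gfun 0 hu]
    simp only [mul_zero, smul_eq_mul, ← hc]
    field_simp
  -- the difference part
  set d : ℝ → ℝ := fun x =>
    ((if x < 1 then u * x else 0) - (if u * x < 1 then u * x else 0)) / x ^ 2 with hd
  have hBiff : ∀ x : ℝ, (u * x < 1 ↔ x < 1 / u) := fun x => by
    rw [lt_div_iff₀' hu]
  have key : ∃ s : Set ℝ, MeasurableSet s ∧ s ⊆ Ioi 0 ∧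
      (∀ x ∈ Ioi (0:ℝ), d x = s.indicator (fun x => if 1 ≤ u then u / x else -(u / x)) x) ∧
      IntegrableOn (fun x => if 1 ≤ u then u / x else -(u / x)) s ∧
      (∫ x in s, (if 1 ≤ u then u / x else -(u / x))) = u * Real.log u := by
    rcases le_or_gt 1 u with h1u | h1u
    · have h1u' : 1 / u ≤ 1 := by rw [div_le_one hu]; exact h1u
      refine ⟨Ico (1/u) 1, measurableSet_Ico,
        fun x hx => lt_of_lt_of_le hu0 hx.1, ?_, ?_, ?_⟩
      · intro x hx
        have hx0 : (0:ℝ) < x := hx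
        simp only [if_pos h1u]
        by_cases hx1 : x < 1
        · by_cases hxu : x < 1/u
          · have hB : u * x < 1 := (hBiff x).mpr hxu
            rw [hd]
            simp only [if_pos hx1, if_pos hB, sub_self, zero_div]
            rw [indicator_of_notMem (fun h => absurd h.1 (not_le.mpr hxu))]
          · have hxu' : 1/u ≤ x := not_lt.mp hxu
            have hB : ¬ u * x < 1 := fun h => hxu ((hBiff x).mp h)
            rw [hd]
            simp only [if_pos hx1, if_neg hB, sub_zero]
            rw [indicator_of_mem (Set.mem_Ico.mpr ⟨hxu', hx1⟩)]
            field_simp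
        · have hx1' : (1:ℝ) ≤ x := not_lt.mp hx1
          have hB : ¬ u * x < 1 := by nlinarith
          rw [hd]
          simp only [if_neg hx1, if_neg hB, sub_self, zero_div]
          rw [indicator_of_notMem (fun h => absurd h.2 hx1)]
      · simp only [if_pos h1u]
        exact (intOn_div hu0).mono_set Ico_subset_Icc_self
      · simp only [if_pos h1u]
        rw [int_div hu0 h1u', Real.log_one, one_div, Real.log_inv]
        ring
    · have h1u' : (1:ℝ) ≤ 1 / u := by rw [le_div_iff₀ hu]; linarith
      have hns : ¬ (1:ℝ) ≤ u := not_le.mpr h1u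
      refine ⟨Ico 1 (1/u), measurableSet_Ico,
        fun x hx => lt_of_lt_of_le one_pos hx.1, ?_, ?_, ?_⟩
      · intro x hx
        have hx0 : (0:ℝ) < x := hx
        simp only [if_neg hns]
        by_cases hx1 : x < 1
        · have hxu : x < 1/u := lt_of_lt_of_le hx1 h1u'
          have hB : u * x < 1 := (hBiff x).mpr hxu
          rw [hd]
          simp only [if_pos hx1, if_pos hB, sub_self, zero_div]
          rw [indicator_of_notMem (fun h => absurd h.1 (not_le.mpr hx1))]
        · by_cases hxu : x < 1/u
          · have hB : u * x < 1 := (hBiff x).mpr hxu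
            rw [hd]
            simp only [if_neg hx1, if_pos hB, zero_sub]
            rw [indicator_of_mem (Set.mem_Ico.mpr ⟨not_lt.mp hx1, hxu⟩)]
            field_simp
          · have hB : ¬ u * x < 1 := fun h => hxu ((hBiff x).mp h)
            rw [hd]
            simp only [if_neg hx1, if_neg hB, sub_self, zero_div]
            rw [indicator_of_notMem (fun h => absurd h.2 hxu)]
      · simp only [if_neg hns]
        exact ((intOn_div one_pos).mono_set Ico_subset_Icc_self).neg
      · simp only [if_neg hns]
        rw [MeasureTheory.integral_neg, int_div one_pos h1u', Real.log_one, one_div,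
          Real.log_inv]
        ring
  obtain ⟨s, hs, hs0, heq, hsint, hsval⟩ := key
  have hdint : IntegrableOn d (Ioi 0) := by
    have hind : Integrable (s.indicator fun x => if 1 ≤ u then u / x else -(u / x)) := by
      rwa [integrable_indicator_iff hs]
    exact IntegrableOn.congr_fun hind.integrableOn
      (fun x hx => (heq x hx).symm) measurableSet_Ioi
  have hdval : ∫ x in Ioi (0:ℝ), d x = u * Real.log u := by
    rw [setIntegral_congr_fun measurableSet_Ioi heq, setIntegral_indicator hs,
      inter_eq_self_of_subset_right hs0, hsval]
  -- pointwise identity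
  have hpt : ∀ x ∈ Ioi (0:ℝ),
      (Real.exp (-u * x) - 1 + (if x < 1 then u * x else 0)) / x ^ 2
        = u ^ 2 * gfun (u * x) + d x := by
    intro x hx
    have hx0 : (0:ℝ) < x := hx
    rw [gfun, hd, neg_mul]
    have hux : (u * x) ^ 2 = u ^ 2 * x ^ 2 := by ring
    rw [hux]
    field_simp
    ring
  constructor
  · exact IntegrableOn.congr_fun (hGint.add hdint)
      (fun x hx => (hpt x hx).symm) measurableSet_Ioi
  · rw [setIntegral_congr_fun measurableSet_Ioi hpt,
      integral_add hGint hdint, hGval, hdval]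
    ring
end
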